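/- arXiv:2103.10732 — 11 statements merged into one kernel-verified Lean document; each statement's English description precedes it below -/
import Mathlib

section
/- A real sequence b : ℕ → ℝ has a concave majorant if and only if the sequence (b(n)/n)_{n≥1} is bounded from above. -/
/-- A real sequence `b` has a concave majorant (a sequence `c ≥ b` with `n ↦ c(n+1) − c(n)`
nonincreasing) if and only if the sequence `(b(n)/n)_{n≥1}` is bounded from above. -/
theorem stmt1 (b : ℕ → ℝ) :
    (∃ c : ℕ → ℝ, (Antitone fun n => c (n + 1) - c n) ∧ ∀ n, b n ≤ c n) ↔
      ∃ M : ℝ, ∀ n : ℕ, 1 ≤ n → b n / (n : ℝ) ≤ M := by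
  constructor
  · rintro ⟨c, hconc, hmaj⟩
    refine ⟨|c 0| + (c 1 - c 0), fun n hn => ?_⟩
    have hlin : ∀ m : ℕ, c m ≤ c 0 + m * (c 1 - c 0) := by
      intro m
      induction m with
      | zero => simp
      | succ k ih =>
        have hd : c (k + 1 + 1) - c (k + 1) ≤ c 1 - c 0 := by
          have := hconc (Nat.zero_le (k + 1))
          simpa using this
        have hd2 : c (k + 1) - c k ≤ c 1 - c 0 := by
          simpa using hconc (Nat.zero_le k)
        push_cast
        linarith
    have hnpos : (0 : ℝ) < n := by exact_mod_cast hn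
    rw [div_le_iff₀ hnpos]
    have h1 : b n ≤ c 0 + n * (c 1 - c 0) := (hmaj n).trans (hlin n)
    have h2 : c 0 ≤ |c 0| * n := by
      calc c 0 ≤ |c 0| := le_abs_self _
      _ ≤ |c 0| * n := le_mul_of_one_le_right (abs_nonneg _) (by exact_mod_cast hn)
    nlinarith
  · rintro ⟨M, hM⟩
    refine ⟨fun n => max (b 0) 0 + M * n, ?_, fun n => ?_⟩
    · intro i j _
      push_cast
      ring_nf
      exact le_refl _
    · rcases Nat.eq_zero_or_pos n with h | h
      · subst h; simp [le_max_left]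
      · have hnpos : (0 : ℝ) < n := by exact_mod_cast h
        have := hM n h
        rw [div_le_iff₀ hnpos] at this
        have hb : b n ≤ M * n := by linarith
        show b n ≤ max (b 0) 0 + M * n
        nlinarith [le_max_right (b 0) (0:ℝ)]
end

section
/- Let b : ℕ → ℝ be a real sequence such that the sequence (b(n)/n)_{n≥1} is bounded from above, and let c : ℕ → ℝ be the least concave majorant of b. Then c(0) = b(0), and for every n ∈ ℕ the supremum sup{(b(k) − c(n))/(k − n) : k ∈ ℕ, k ≥ n+1} is finite and c(n+1) = c(n) + sup{(b(k) − c(n))/(k − n) : k ∈ ℕ, k ≥ n+1}. -/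
/-- min of two concave sequences is concave -/
lemma minConcAux (g h : ℕ → ℝ) (hg : Antitone fun n => g (n + 1) - g n)
    (hh : Antitone fun n => h (n + 1) - h n) :
    Antitone fun n => min (g (n + 1)) (h (n + 1)) - min (g n) (h n) := by
  apply antitone_nat_of_succ_le
  intro n
  have hg' : g (n + 2) - g (n + 1) ≤ g (n + 1) - g n := hg (Nat.le_succ n)
  have hh' : h (n + 2) - h (n + 1) ≤ h (n + 1) - h n := hh (Nat.le_succ n)
  rcases le_total (g (n + 1)) (h (n + 1)) with h1 | h1
  · rw [min_eq_left h1]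
    have a1 : min (g (n + 2)) (h (n + 2)) ≤ g (n + 2) := min_le_left _ _
    have a2 : min (g n) (h n) ≤ g n := min_le_left _ _
    linarith
  · rw [min_eq_right h1]
    have a1 : min (g (n + 2)) (h (n + 2)) ≤ h (n + 2) := min_le_right _ _
    have a2 : min (g n) (h n) ≤ h n := min_le_right _ _
    linarith

/-- Theorem 3.6 (3.6.1)–(3.6.2): if `(b(n)/n)_{n≥1}` is bounded from above and `c` is the
least concave majorant of `b`, then `c(0) = b(0)` and for every `n` the set
`{(b(k) − c(n))/(k − n) : k ≥ n+1}` has a (finite) supremum, which equals `c(n+1) − c(n)`. -/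
theorem stmt2 (b c : ℕ → ℝ)
    (hb : ∃ M : ℝ, ∀ n : ℕ, 1 ≤ n → b n / (n : ℝ) ≤ M)
    (hcConc : Antitone fun n => c (n + 1) - c n)
    (hcMaj : ∀ n, b n ≤ c n)
    (hcLeast : ∀ d : ℕ → ℝ, (Antitone fun n => d (n + 1) - d n) → (∀ n, b n ≤ d n) →
      ∀ n, c n ≤ d n) :
    c 0 = b 0 ∧
      ∀ n : ℕ, IsLUB {x : ℝ | ∃ k : ℕ, n + 1 ≤ k ∧ x = (b k - c n) / ((k : ℝ) - (n : ℝ))}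
        (c (n + 1) - c n) := by
  obtain ⟨M, hM⟩ := hb
  -- Lemma A: c (n+k) - c n ≤ k * (c (n+1) - c n)
  have lemA : ∀ n k : ℕ, c (n + k) - c n ≤ (k : ℝ) * (c (n + 1) - c n) := by
    intro n k
    induction k with
    | zero => simp
    | succ k ih =>
      have h1 : c (n + k + 1) - c (n + k) ≤ c (n + 1) - c n := hcConc (Nat.le_add_right n k)
      have : n + (k + 1) = n + k + 1 := by omega
      rw [this]
      push_cast
      linarith
  -- Lemma B: (k : ℝ) * (c (m+k+1) - c (m+k)) ≤ c (m+k) - c m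
  have lemB : ∀ m k : ℕ, (k : ℝ) * (c (m + k + 1) - c (m + k)) ≤ c (m + k) - c m := by
    intro m k
    induction k with
    | zero => simp
    | succ k ih =>
      have h1 : c (m + k + 1 + 1) - c (m + k + 1) ≤ c (m + k + 1) - c (m + k) :=
        hcConc (Nat.le_succ (m + k))
      have e1 : m + (k + 1) = m + k + 1 := by omega
      rw [e1]
      push_cast
      nlinarith [Nat.cast_nonneg (α := ℝ) k]
  constructor
  · -- c 0 = b 0
    set K : ℝ := M + |b 0| with hK
    set d : ℕ → ℝ := fun m => min (c m) (b 0 + (m : ℝ) * K) with hd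
    have hline : Antitone fun m : ℕ => (b 0 + ((m + 1 : ℕ) : ℝ) * K) - (b 0 + (m : ℝ) * K) := by
      have : (fun m : ℕ => (b 0 + ((m + 1 : ℕ) : ℝ) * K) - (b 0 + (m : ℝ) * K)) =
          fun _ => K := by
        funext m; push_cast; ring
      rw [this]; exact antitone_const
    have hdConc : Antitone fun m => d (m + 1) - d m :=
      minConcAux c (fun m => b 0 + (m : ℝ) * K) hcConc hline
    have hdMaj : ∀ m, b m ≤ d m := by
      intro m
      refine le_min (hcMaj m) ?_
      rcases Nat.eq_zero_or_pos m with hm | hm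
      · subst hm; simp
      · have h1 : b m / (m : ℝ) ≤ M := hM m hm
        have hm' : (0 : ℝ) < m := by exact_mod_cast hm
        have hm1 : (1 : ℝ) ≤ m := by exact_mod_cast hm
        have h2 : b m ≤ M * m := by
          rw [div_le_iff₀ hm'] at h1; linarith
        have h3 : 0 ≤ b 0 + (m : ℝ) * |b 0| := by
          have : b 0 + |b 0| ≥ 0 := by
            rcases abs_cases (b 0) with ⟨h, _⟩ | ⟨h, _⟩ <;> linarith
          nlinarith [abs_nonneg (b 0)]
        rw [hK]; nlinarith
    have h1 : c 0 ≤ d 0 := hcLeast d hdConc hdMaj 0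
    have h2 : d 0 ≤ b 0 := by simp [hd]
    have h3 : b 0 ≤ c 0 := hcMaj 0
    linarith
  · intro n
    constructor
    · -- upper bound
      rintro x ⟨k, hk, rfl⟩
      obtain ⟨j, rfl⟩ : ∃ j, k = n + (j + 1) := ⟨k - (n + 1), by omega⟩
      have hA := lemA n (j + 1)
      have hb' := hcMaj (n + (j + 1))
      have hpos : (0 : ℝ) < ((n + (j + 1) : ℕ) : ℝ) - (n : ℝ) := by
        push_cast; linarith [Nat.cast_nonneg (α := ℝ) j]
      rw [div_le_iff₀ hpos]
      push_cast at *
      nlinarith [Nat.cast_nonneg (α := ℝ) j]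
    · -- least upper bound
      intro s hs
      by_contra hcon
      push_neg at hcon
      set d : ℕ → ℝ := fun m => min (c m) (c n + ((m : ℝ) - (n : ℝ)) * s) with hd
      have hline : Antitone fun m : ℕ =>
          (c n + (((m + 1 : ℕ) : ℝ) - (n : ℝ)) * s) - (c n + ((m : ℝ) - (n : ℝ)) * s) := by
        have : (fun m : ℕ =>
            (c n + (((m + 1 : ℕ) : ℝ) - (n : ℝ)) * s) - (c n + ((m : ℝ) - (n : ℝ)) * s)) =
            fun _ => s := by
          funext m; push_cast; ring
        rw [this]; exact antitone_const
      have hdConc : Antitone fun m => d (m + 1) - d m :=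
        minConcAux c (fun m => c n + ((m : ℝ) - (n : ℝ)) * s) hcConc hline
      have hdMaj : ∀ m, b m ≤ d m := by
        intro m
        rcases le_or_gt m n with hm | hm
        · -- m ≤ n : c m ≤ line m
          obtain ⟨j, rfl⟩ : ∃ j, n = m + j := ⟨n - m, by omega⟩
          have hB := lemB m j
          have hstep : c (m + j + 1) - c (m + j) ≥ s := le_of_lt hcon
          have hcm : c m ≤ c (m + j) + (((m : ℕ) : ℝ) - ((m + j : ℕ) : ℝ)) * s := by
            push_cast
            nlinarith [Nat.cast_nonneg (α := ℝ) j]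
          exact le_min (hcMaj m) (le_trans (hcMaj m) hcm)
        · -- m ≥ n + 1
          have hmem : (b m - c n) / ((m : ℝ) - (n : ℝ)) ∈
              {x : ℝ | ∃ k : ℕ, n + 1 ≤ k ∧ x = (b k - c n) / ((k : ℝ) - (n : ℝ))} :=
            ⟨m, by omega, rfl⟩
          have h1 : (b m - c n) / ((m : ℝ) - (n : ℝ)) ≤ s := hs hmem
          have hpos : (0 : ℝ) < (m : ℝ) - (n : ℝ) := by
            have : (n : ℝ) < m := by exact_mod_cast hm
            linarith
          rw [div_le_iff₀ hpos] at h1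
          exact le_min (hcMaj m) (by linarith)
      have h1 : c (n + 1) ≤ d (n + 1) := hcLeast d hdConc hdMaj (n + 1)
      have h2 : d (n + 1) ≤ c n + (((n + 1 : ℕ) : ℝ) - (n : ℝ)) * s := min_le_right _ _
      have h3 : (((n + 1 : ℕ) : ℝ) - (n : ℝ)) = 1 := by push_cast; ring
      rw [h3] at h2
      linarith
end

section
/- Let b : ℕ → ℝ be a real sequence such that the sequence (b(n)/n)_{n≥1} is bounded from above, and let c : ℕ → ℝ be the least concave majorant of b. Then for each n ∈ ℕ and each k ∈ ℕ with k ≥ n+2, one has (b(k) − c(n+1))/(k − n − 1) ≤ (b(k) − c(n))/(k − n). Moreover, if in addition (b(k) − c(n))/(k − n) = max{(b(j) − c(n))/(j − n) : j ∈ ℕ, j ≥ n+1}, then for all h = n, …, k−1 one has (b(k) − c(h))/(k − h) = max{(b(j) − c(h))/(j − h) : j ∈ ℕ, j ≥ h+1} = (b(k) − c(n))/(k − n), and consequently c(h+1) − c(h) = c(n+1) − c(n) for all h = n, …, k−1. -/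
private lemma tele_aux (c : ℕ → ℝ) (hcConc : Antitone fun n => c (n + 1) - c n)
    (n m : ℕ) : c (n + m) ≤ c n + m * (c (n + 1) - c n) := by
  induction m with
  | zero => simp
  | succ m ih =>
    have h := hcConc (Nat.le_add_right n m)
    simp only at h
    have : n + (m + 1) = (n + m) + 1 := by omega
    rw [this]
    push_cast
    nlinarith

private lemma slope_le_aux (b c : ℕ → ℝ) (hcConc : Antitone fun n => c (n + 1) - c n)
    (hcMaj : ∀ n, b n ≤ c n) (n j : ℕ) (hj : n + 1 ≤ j) :
    (b j - c n) / ((j : ℝ) - (n : ℝ)) ≤ c (n + 1) - c n := by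
  have hjn : (n : ℝ) + 1 ≤ (j : ℝ) := by exact_mod_cast hj
  have hpos : (0 : ℝ) < (j : ℝ) - n := by linarith
  rw [div_le_iff₀ hpos]
  have hsplit : j = n + (j - n) := by omega
  have hcast : ((j - n : ℕ) : ℝ) = (j : ℝ) - n := by
    have : n ≤ j := by omega
    push_cast [this]; ring
  have h1 : b j ≤ c j := hcMaj j
  have h2 : c (n + (j - n)) ≤ c n + ((j - n : ℕ) : ℝ) * (c (n + 1) - c n) :=
    tele_aux c hcConc n (j - n)
  rw [← hsplit, hcast] at h2
  nlinarith

/-- Theorem 3.6 (3.6.3): with `c` the least concave majorant of `b`, where `(b(n)/n)_{n≥1}`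
is bounded above: for `k ≥ n+2` one has
`(b(k) − c(n+1))/(k − n − 1) ≤ (b(k) − c(n))/(k − n)`; moreover if
`(b(k) − c(n))/(k − n)` is the maximum of `{(b(j) − c(n))/(j − n) : j ≥ n+1}`, then for all
`h = n, …, k−1` the quantity `(b(k) − c(h))/(k − h)` is the maximum of
`{(b(j) − c(h))/(j − h) : j ≥ h+1}` and equals `(b(k) − c(n))/(k − n)`, and consequently
`c(h+1) − c(h) = c(n+1) − c(n)`. -/
theorem stmt3 (b c : ℕ → ℝ)
    (hb : ∃ M : ℝ, ∀ n : ℕ, 1 ≤ n → b n / (n : ℝ) ≤ M)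
    (hcConc : Antitone fun n => c (n + 1) - c n)
    (hcMaj : ∀ n, b n ≤ c n)
    (hcLeast : ∀ d : ℕ → ℝ, (Antitone fun n => d (n + 1) - d n) → (∀ n, b n ≤ d n) →
      ∀ n, c n ≤ d n) :
    ∀ n k : ℕ, n + 2 ≤ k →
      ((b k - c (n + 1)) / ((k : ℝ) - (n : ℝ) - 1) ≤ (b k - c n) / ((k : ℝ) - (n : ℝ))) ∧
      ((∀ j : ℕ, n + 1 ≤ j → (b j - c n) / ((j : ℝ) - (n : ℝ)) ≤
          (b k - c n) / ((k : ℝ) - (n : ℝ))) →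
        ∀ h : ℕ, n ≤ h → h ≤ k - 1 →
          (∀ j : ℕ, h + 1 ≤ j → (b j - c h) / ((j : ℝ) - (h : ℝ)) ≤
            (b k - c h) / ((k : ℝ) - (h : ℝ))) ∧
          (b k - c h) / ((k : ℝ) - (h : ℝ)) = (b k - c n) / ((k : ℝ) - (n : ℝ)) ∧
          c (h + 1) - c h = c (n + 1) - c n) := by
  intro n k hk
  have hkn : (n : ℝ) + 2 ≤ (k : ℝ) := by exact_mod_cast hk
  have hpos : (0 : ℝ) < (k : ℝ) - n := by linarith
  have hpos1 : (0 : ℝ) < (k : ℝ) - n - 1 := by linarith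
  set q : ℝ := (b k - c n) / ((k : ℝ) - (n : ℝ)) with hqdef
  have hbk : b k - c n = q * ((k : ℝ) - n) := by
    rw [hqdef]; field_simp
  have hsq : q ≤ c (n + 1) - c n :=
    slope_le_aux b c hcConc hcMaj n k (by omega)
  constructor
  · -- part 1
    rw [div_le_iff₀ hpos1]
    nlinarith
  · intro hmax
    -- show c (n+1) - c n ≤ q via the least property
    set d : ℕ → ℝ := fun j => if j ≤ n then c j else c n + ((j : ℝ) - n) * q with hddef
    have hinc : ∀ m : ℕ, d (m + 1) - d m = if m < n then c (m + 1) - c m else q := by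
      intro m
      by_cases hm : m < n
      · have h1 : m + 1 ≤ n := hm
        have h2 : m ≤ n := by omega
        simp [hddef, h1, h2, hm]
      · have h1 : ¬ (m + 1 ≤ n) := by omega
        by_cases hm2 : m = n
        · subst hm2
          simp only [hddef, h1, hm, if_false, if_true, le_refl]
          push_cast; ring
        · have h2 : ¬ (m ≤ n) := by omega
          simp [hddef, h1, h2, hm]
          push_cast
          ring
    have hdconc : Antitone fun m => d (m + 1) - d m := by
      intro i j hij
      simp only [hinc]
      by_cases hj : j < n
      · have hi : i < n := by omega
        simp only [hj, hi, if_true]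
        exact hcConc hij
      · by_cases hi : i < n
        · simp only [hj, hi, if_true, if_false]
          have := hcConc (show i ≤ n from le_of_lt hi)
          simp only at this
          linarith
        · simp [hj, hi]
    have hdmaj : ∀ m, b m ≤ d m := by
      intro m
      by_cases hm : m ≤ n
      · simp [hddef, hm]; exact hcMaj m
      · simp only [hddef, hm, if_false]
        have hm1 : n + 1 ≤ m := by omega
        have hmn : (n : ℝ) + 1 ≤ (m : ℝ) := by exact_mod_cast hm1
        have hmpos : (0 : ℝ) < (m : ℝ) - n := by linarith
        have := hmax m hm1
        rw [div_le_iff₀ hmpos] at this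
        linarith
    have hle : c (n + 1) ≤ d (n + 1) := hcLeast d hdconc hdmaj (n + 1)
    have hdn1 : d (n + 1) = c n + q := by
      have h1 : ¬ (n + 1 ≤ n) := by omega
      simp only [hddef, h1, if_false]
      push_cast; ring
    have hq : c (n + 1) - c n = q := by
      rw [hdn1] at hle; linarith
    -- c (n + m) ≤ c n + m * q
    have htel : ∀ m : ℕ, c (n + m) ≤ c n + m * q := by
      intro m
      have := tele_aux c hcConc n m
      rw [hq] at this; exact this
    -- c k - c (k-1) ≥ q
    have hk1 : k - 1 + 1 = k := by omega
    have hck1 : c (k - 1) ≤ c n + ((k - 1 - n : ℕ) : ℝ) * q := by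
      have := htel (k - 1 - n)
      have hsplit : n + (k - 1 - n) = k - 1 := by omega
      rwa [hsplit] at this
    have hcastk1 : ((k - 1 - n : ℕ) : ℝ) = (k : ℝ) - n - 1 := by
      have h1 : n + 1 ≤ k := by omega
      push_cast [Nat.cast_sub (show n ≤ k - 1 by omega), Nat.cast_sub (show 1 ≤ k by omega)]
      ring
    have hlast : q ≤ c k - c (k - 1) := by
      have hbk' : b k ≤ c k := hcMaj k
      rw [hcastk1] at hck1
      nlinarith
    -- all increments on [n, k-1] equal q
    have hstep : ∀ h : ℕ, n ≤ h → h + 1 ≤ k → c (h + 1) - c h = q := by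
      intro h h1 h2
      have hle1 : c (h + 1) - c h ≤ c (n + 1) - c n := hcConc h1
      have hge1 : c (k - 1 + 1) - c (k - 1) ≤ c (h + 1) - c h := hcConc (show h ≤ k - 1 by omega)
      rw [hk1] at hge1
      rw [hq] at hle1
      linarith
    -- c (n + m) = c n + m * q for n + m ≤ k
    have hch : ∀ m : ℕ, n + m ≤ k → c (n + m) = c n + m * q := by
      intro m
      induction m with
      | zero => simp
      | succ m ih =>
        intro hmk
        have h1 : n + m ≤ k := by omega
        have h2 : c (n + m + 1) - c (n + m) = q := hstep (n + m) (by omega) (by omega)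
        have := ih h1
        have hnm : n + (m + 1) = (n + m) + 1 := by omega
        rw [hnm]
        push_cast
        linarith
    intro h hnh hhk
    have hhk' : h + 1 ≤ k := by omega
    have hcheq : c h = c n + ((h : ℝ) - n) * q := by
      have := hch (h - n) (by omega)
      have hsplit : n + (h - n) = h := by omega
      rw [hsplit] at this
      have hcast : ((h - n : ℕ) : ℝ) = (h : ℝ) - n := by
        push_cast [Nat.cast_sub hnh]; ring
      rw [hcast] at this
      exact this
    have hhr : (h : ℝ) ≤ (k : ℝ) - 1 := by
      have : (h : ℝ) + 1 ≤ (k : ℝ) := by exact_mod_cast hhk'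
      linarith
    have hposh : (0 : ℝ) < (k : ℝ) - h := by linarith
    have hmain : (b k - c h) / ((k : ℝ) - (h : ℝ)) = q := by
      rw [hcheq]
      rw [div_eq_iff (ne_of_gt hposh)]
      nlinarith
    refine ⟨?_, hmain, ?_⟩
    · intro j hj
      have := slope_le_aux b c hcConc hcMaj h j hj
      rw [hmain]
      have hq2 : c (h + 1) - c h = q := hstep h hnh hhk'
      linarith
    · rw [hstep h hnh hhk', hq]
end

section
/- Let b : ℕ → ℝ be a real sequence such that the sequence (b(n)/n)_{n≥1} is bounded from above, and let c : ℕ → ℝ be the least concave majorant of b. Set ℓ = limsup_{n→+∞} b(n)/n (an element of [−∞,+∞)). Then c(n+1) − c(n) ≥ ℓ for every n ∈ ℕ, and for every n ∈ ℕ one has limsup_{k→+∞} (b(k) − c(n))/(k − n) = ℓ. -/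
open Filter Topology

private lemma aux_tendsto (A B : ℝ) (n : ℕ) :
    Tendsto (fun k : ℕ => (A * k + B) / ((k : ℝ) - n)) atTop (nhds A) := by
  have hden : Tendsto (fun k : ℕ => ((k : ℝ) - n)) atTop atTop :=
    tendsto_atTop_add_const_right _ (-(n:ℝ)) tendsto_natCast_atTop_atTop |>.congr (by
      intro k; ring)
  have h0 : Tendsto (fun k : ℕ => (A * n + B) / ((k : ℝ) - n)) atTop (nhds 0) :=
    Tendsto.div_atTop tendsto_const_nhds hden
  have h1 : Tendsto (fun k : ℕ => A + (A * n + B) / ((k : ℝ) - n)) atTop (nhds A) := by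
    simpa using tendsto_const_nhds.add h0
  apply h1.congr'
  filter_upwards [eventually_gt_atTop n] with k hk
  have hne : (k : ℝ) - n ≠ 0 := by
    have : (n : ℝ) < k := by exact_mod_cast hk
    linarith
  field_simp
  ring

/-- Theorem 3.8 (3.8.1): let `c` be the least concave majorant of `b`, where `(b(n)/n)_{n≥1}`
is bounded above, and set `ℓ = limsup_{n→∞} b(n)/n` (in the extended reals). Then
`ℓ ∈ [−∞, +∞)`, `c(n+1) − c(n) ≥ ℓ` for every `n`, and
`limsup_{k→∞} (b(k) − c(n))/(k − n) = ℓ` for every `n`. -/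
theorem stmt5 (b c : ℕ → ℝ)
    (hb : ∃ M : ℝ, ∀ n : ℕ, 1 ≤ n → b n / (n : ℝ) ≤ M)
    (hcConc : Antitone fun n => c (n + 1) - c n)
    (hcMaj : ∀ n, b n ≤ c n)
    (hcLeast : ∀ d : ℕ → ℝ, (Antitone fun n => d (n + 1) - d n) → (∀ n, b n ≤ d n) →
      ∀ n, c n ≤ d n) :
    Filter.limsup (fun n : ℕ => ((b n / (n : ℝ) : ℝ) : EReal)) Filter.atTop ≠ ⊤ ∧
    (∀ n : ℕ, Filter.limsup (fun n : ℕ => ((b n / (n : ℝ) : ℝ) : EReal)) Filter.atTop ≤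
      ((c (n + 1) - c n : ℝ) : EReal)) ∧
    ∀ n : ℕ, Filter.limsup (fun k : ℕ => (((b k - c n) / ((k : ℝ) - (n : ℝ)) : ℝ) : EReal))
      Filter.atTop = Filter.limsup (fun n : ℕ => ((b n / (n : ℝ) : ℝ) : EReal)) Filter.atTop := by
  obtain ⟨M, hM⟩ := hb
  set ℓ := Filter.limsup (fun n : ℕ => ((b n / (n : ℝ) : ℝ) : EReal)) Filter.atTop with hℓ
  have hℓM : ℓ ≤ (M : EReal) := by
    have hev : ∀ᶠ k : ℕ in atTop, ((b k / (k : ℝ) : ℝ) : EReal) ≤ (M : EReal) := by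
      filter_upwards [eventually_ge_atTop 1] with k hk
      exact_mod_cast hM k hk
    exact limsup_le_of_le (h := hev)
  refine ⟨ne_top_of_le_ne_top (EReal.coe_ne_top M) hℓM, ?_, ?_⟩
  · -- slopes bound limsup
    intro n
    set s := c (n + 1) - c n with hs
    have hslope : ∀ k, n ≤ k → c k ≤ c n + s * ((k : ℝ) - n) := by
      intro k hk
      induction k, hk using Nat.le_induction with
      | base => simp
      | succ k hk ih =>
        have h1 : c (k + 1) - c k ≤ s := hcConc hk
        have : ((k + 1 : ℕ) : ℝ) = (k : ℝ) + 1 := by push_cast; ring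
        rw [this]
        nlinarith
    have hgoal : ℓ ≤ ((s : ℝ) : EReal) := by
      have htends : Tendsto (fun k : ℕ => (((s * k + (c n - s * n)) / (k : ℝ) : ℝ) : EReal))
          atTop (nhds ((s : ℝ) : EReal)) := by
        rw [EReal.tendsto_coe]
        have := aux_tendsto s (c n - s * n) 0
        simpa using this
      have hlimsup : Filter.limsup (fun k : ℕ => (((s * k + (c n - s * n)) / (k : ℝ) : ℝ) : EReal))
          atTop = ((s : ℝ) : EReal) := htends.limsup_eq
      rw [← hlimsup]
      refine limsup_le_limsup ?_
      filter_upwards [eventually_ge_atTop (n + 1)] with k hk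
      have hkpos : (0 : ℝ) < k := by
        have : 1 ≤ k := le_trans (Nat.le_add_left 1 n) hk
        exact_mod_cast this
      have hbk : b k ≤ s * k + (c n - s * n) := by
        have := hslope k (le_trans (Nat.le_succ n) hk)
        have := hcMaj k
        nlinarith
      exact EReal.coe_le_coe_iff.2 (div_le_div_of_nonneg_right hbk hkpos.le)
    exact hgoal
  · intro n
    set F := fun k : ℕ => (((b k - c n) / ((k : ℝ) - (n : ℝ)) : ℝ) : EReal) with hF
    apply le_antisymm
    · -- limsup F ≤ ℓ
      rw [← EReal.le_of_forall_lt_iff_le]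
      intro z hz
      have hev : ∀ᶠ k in atTop, ((b k / (k : ℝ) : ℝ) : EReal) < (z : EReal) :=
        eventually_lt_of_limsup_lt hz
      have htends : Tendsto (fun k : ℕ => (((z * k + (-(c n))) / ((k : ℝ) - n) : ℝ) : EReal))
          atTop (nhds ((z : ℝ) : EReal)) := by
        rw [EReal.tendsto_coe]; exact aux_tendsto z (-(c n)) n
      rw [← htends.limsup_eq]
      refine limsup_le_limsup ?_
      filter_upwards [hev, eventually_gt_atTop n] with k hk hkn
      have hkr : (n : ℝ) < k := by exact_mod_cast hkn
      have hkpos : (0 : ℝ) < k := lt_of_le_of_lt (Nat.cast_nonneg n) hkr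
      have hbz : b k / k < z := by exact_mod_cast hk
      have hbk : b k < z * k := (div_lt_iff₀ hkpos).1 hbz
      have : (b k - c n) / ((k : ℝ) - n) ≤ (z * k + (-(c n))) / ((k : ℝ) - n) := by
        apply div_le_div_of_nonneg_right _ (by linarith : (0:ℝ) ≤ (k:ℝ) - n)
        linarith
      exact EReal.coe_le_coe_iff.2 this
    · -- ℓ ≤ limsup F
      rw [← EReal.ge_of_forall_gt_iff_ge]
      intro z hz
      obtain ⟨z', hzz', hz'ℓ⟩ := EReal.exists_between_coe_real hz
      have hfreq : ∃ᶠ k in atTop, ((z' : ℝ) : EReal) < ((b k / (k : ℝ) : ℝ) : EReal) :=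
        frequently_lt_of_lt_limsup (by isBoundedDefault) hz'ℓ
      have htends : Tendsto (fun k : ℕ => (z' * k + (-(c n))) / ((k : ℝ) - n))
          atTop (nhds z') := aux_tendsto z' (-(c n)) n
      have hzz'' : z < z' := by exact_mod_cast hzz'
      have hev : ∀ᶠ k : ℕ in atTop, z < (z' * k + (-(c n))) / ((k : ℝ) - n) :=
        htends.eventually (eventually_gt_nhds hzz'')
      refine le_limsup_of_frequently_le ?_
      refine (hfreq.and_eventually (hev.and (eventually_gt_atTop n))).mono ?_
      rintro k ⟨h1, h2, h3⟩
      have hkr : (n : ℝ) < k := by exact_mod_cast h3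
      have hkpos : (0 : ℝ) < k := lt_of_le_of_lt (Nat.cast_nonneg n) hkr
      have hbz : z' < b k / k := by exact_mod_cast h1
      have hbk : z' * k < b k := (lt_div_iff₀ hkpos).1 hbz
      have hle : (z' * k + (-(c n))) / ((k : ℝ) - n) ≤ (b k - c n) / ((k : ℝ) - n) := by
        apply div_le_div_of_nonneg_right _ (by linarith : (0:ℝ) ≤ (k:ℝ) - n)
        linarith
      have : z ≤ (b k - c n) / ((k : ℝ) - n) := le_trans (le_of_lt h2) hle
      exact EReal.coe_le_coe_iff.2 this
end

section
/- Let b : ℕ → ℝ be a real sequence such that the sequence (b(n)/n)_{n≥1} is bounded from above and b is not bounded from above, and let c : ℕ → ℝ be the least concave majorant of b. Then c is strictly increasing, c(n) → +∞ as n → +∞, and limsup_{n→+∞} b(n)/c(n) = 1. -/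
/-- Theorem 3.9: if `(b(n)/n)_{n≥1}` is bounded from above but `b` is not bounded from
above, and `c` is the least concave majorant of `b`, then `c` is strictly increasing,
`c(n) → +∞`, and `limsup_{n→∞} b(n)/c(n) = 1` (in the extended reals). -/
theorem stmt6 (b c : ℕ → ℝ)
    (hb : ∃ M : ℝ, ∀ n : ℕ, 1 ≤ n → b n / (n : ℝ) ≤ M)
    (hbUnbdd : ¬∃ M : ℝ, ∀ n, b n ≤ M)
    (hcConc : Antitone fun n => c (n + 1) - c n)
    (hcMaj : ∀ n, b n ≤ c n)
    (hcLeast : ∀ d : ℕ → ℝ, (Antitone fun n => d (n + 1) - d n) → (∀ n, b n ≤ d n) →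
      ∀ n, c n ≤ d n) :
    StrictMono c ∧ Filter.Tendsto c Filter.atTop Filter.atTop ∧
      Filter.limsup (fun n : ℕ => ((b n / c n : ℝ) : EReal)) Filter.atTop = 1 := by
  -- Step 1: every increment of c is positive.
  have hpos : ∀ n, 0 < c (n + 1) - c n := by
    by_contra h
    push_neg at h
    obtain ⟨N, hN⟩ := h
    -- then c is nonincreasing from N on
    have hdec : ∀ n, N ≤ n → c n ≤ c N := by
      intro n hn
      induction n, hn using Nat.le_induction with
      | base => exact le_refl _
      | succ n hn ih =>
        have h1 : c (n + 1) - c n ≤ c (N + 1) - c N := hcConc hn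
        linarith
    -- so b is bounded above, contradiction
    apply hbUnbdd
    refine ⟨(Finset.range (N + 1)).sup' ⟨0, by simp⟩ c, fun n => ?_⟩
    rcases le_or_gt n N with hn | hn
    · exact (hcMaj n).trans (Finset.le_sup' c (Finset.mem_range.mpr (Nat.lt_succ_of_le hn)))
    · exact (hcMaj n).trans ((hdec n hn.le).trans
        (Finset.le_sup' c (by simp)))
  have hmono : StrictMono c := strictMono_nat_of_lt_succ fun n => by linarith [hpos n]
  -- Step 2: c tends to infinity.
  have htop : Filter.Tendsto c Filter.atTop Filter.atTop := by
    apply Filter.tendsto_atTop_atTop_of_monotone hmono.monotone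
    intro M
    push_neg at hbUnbdd
    obtain ⟨n, hn⟩ := hbUnbdd M
    exact ⟨n, hn.le.trans (hcMaj n)⟩
  refine ⟨hmono, htop, ?_⟩
  -- eventually c n > 0
  have hc0 : ∀ᶠ n in Filter.atTop, 0 < c n := htop.eventually_gt_atTop 0
  -- Step 3a: limsup ≤ 1.
  have hle : Filter.limsup (fun n : ℕ => ((b n / c n : ℝ) : EReal)) Filter.atTop ≤ 1 := by
    refine Filter.limsup_le_of_le (by isBoundedDefault) ?_
    filter_upwards [hc0] with n hn
    have : b n / c n ≤ 1 := (div_le_one hn).mpr (hcMaj n)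
    exact_mod_cast this
  -- Step 3b: limsup ≥ 1.
  have hge : (1 : EReal) ≤ Filter.limsup (fun n : ℕ => ((b n / c n : ℝ) : EReal))
      Filter.atTop := by
    by_contra hcon
    push_neg at hcon
    set L := Filter.limsup (fun n : ℕ => ((b n / c n : ℝ) : EReal)) Filter.atTop with hL
    -- produce a real r with 0 ≤ r, r < 1, L < r
    obtain ⟨r, hr0, hr1, hrL⟩ : ∃ r : ℝ, 0 ≤ r ∧ r < 1 ∧ L < (r : EReal) := by
      rcases lt_or_ge L (((1 : ℝ) / 2 : ℝ) : EReal) with h | h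
      · exact ⟨1 / 2, by norm_num, by norm_num, h⟩
      · have hbot : L ≠ ⊥ := fun hb' => by simp [hb'] at h
        have htop' : L ≠ ⊤ := fun ht' => by
          rw [ht'] at hcon
          exact (not_le.mpr hcon) le_top
        have hLr : L = ((L.toReal : ℝ) : EReal) := (EReal.coe_toReal htop' hbot).symm
        have hlt1 : L.toReal < 1 := by
          have : ((L.toReal : ℝ) : EReal) < ((1 : ℝ) : EReal) := by
            rw [← hLr]; exact_mod_cast hcon
          exact_mod_cast this
        have hhalf : (1 : ℝ) / 2 ≤ L.toReal := by
          have : (((1 : ℝ) / 2 : ℝ) : EReal) ≤ ((L.toReal : ℝ) : EReal) := by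
            rw [← hLr]; exact h
          exact_mod_cast this
        refine ⟨(L.toReal + 1) / 2, by linarith, by linarith, ?_⟩
        rw [hLr]
        exact_mod_cast (by linarith : L.toReal < (L.toReal + 1) / 2)
    -- eventually b n / c n < r
    have hev : ∀ᶠ n in Filter.atTop, ((b n / c n : ℝ) : EReal) < (r : EReal) :=
      Filter.eventually_lt_of_limsup_lt hrL
    obtain ⟨N, hN⟩ := Filter.eventually_atTop.mp (hev.and hc0)
    -- construct a smaller concave majorant d n = r * c n + K
    set K : ℝ := (Finset.range (N + 1)).sup' ⟨0, by simp⟩ (fun n => max 0 (b n - r * c n))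
      with hK
    have hK0 : 0 ≤ K := by
      rw [hK]
      exact le_trans (le_max_left 0 (b 0 - r * c 0))
        (Finset.le_sup' (fun n => max 0 (b n - r * c n)) (Finset.mem_range.mpr (Nat.succ_pos N)))
    have hd_conc : Antitone fun n => (r * c (n + 1) + K) - (r * c n + K) := by
      intro m n h
      have h1 : c (n + 1) - c n ≤ c (m + 1) - c m := hcConc h
      have := mul_le_mul_of_nonneg_left h1 hr0
      simp only
      nlinarith
    have hd_maj : ∀ n, b n ≤ r * c n + K := by
      intro n
      rcases le_or_gt n N with hn | hn
      · have : b n - r * c n ≤ K := by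
          rw [hK]
          exact le_trans (le_max_right 0 (b n - r * c n))
            (Finset.le_sup' (fun n => max 0 (b n - r * c n))
              (Finset.mem_range.mpr (Nat.lt_succ_of_le hn)))
        linarith
      · obtain ⟨hlt, hcn⟩ := hN n hn.le
        have hlt' : b n / c n < r := by exact_mod_cast hlt
        have : b n < r * c n := (div_lt_iff₀ hcn).mp hlt'
        linarith
    have hle' : ∀ n, c n ≤ r * c n + K := hcLeast _ hd_conc hd_maj
    -- contradiction with c → ∞
    obtain ⟨n, hn⟩ := (htop.eventually_ge_atTop ((K + 1) / (1 - r))).exists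
    have h1r : 0 < 1 - r := by linarith
    have := hle' n
    have : (1 - r) * c n ≤ K := by linarith
    have : (1 - r) * ((K + 1) / (1 - r)) ≤ K := by nlinarith
    rw [mul_div_cancel₀ _ (ne_of_gt h1r)] at this
    linarith
  exact le_antisymm hle hge
end

section
/- Let a : ℕ → ℝ be a nondecreasing concave sequence. Then for each p ∈ ℕ and every n ∈ ℕ, one has (1/(p+1))·C(n+p, p)·a(n) + (p/(p+1))·C(n+p, p)·a(0) ≤ (Σ^p a)(n) ≤ C(n+p, p)·a(n), where C(n+p, p) denotes the binomial coefficient (n+p choose p). -/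
/-!
`(Σ^p a)(n)` depends linearly and monotonically on `a(0), …, a(n)`, and on the binomial
sequences it is explicit: `Σ (k ↦ C(k+r, r)) = (k ↦ C(k+r+1, r+1))` (hockey stick), so
`(Σ^p 1)(n) = C(n+p, p)` and `(Σ^p k)(n) = C(n+p, p+1) = n/(p+1) · C(n+p, p)`.
For the upper bound compare `a` with the constant `a(n)` on `[0, n]` (monotonicity); for the
lower bound compare it with its chord `k ↦ a(0) + k (a(n) - a(0)) / n`, which lies below `a` on
`[0, n]` by concavity.
-/

/-- The summation operator on real sequences: `(Σa)(n) = ∑_{k=0}^{n} a(k)`. -/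
def sigSeq (a : ℕ → ℝ) : ℕ → ℝ := fun n => ∑ k ∈ Finset.range (n + 1), a k

open Finset

def sigSeqLinear : Module.End ℝ (ℕ → ℝ) where
  toFun := sigSeq
  map_add' a b := by ext n; simp [sigSeq, sum_add_distrib]
  map_smul' c a := by ext n; simp [sigSeq, mul_sum]

lemma iterate_sigSeq_eq_pow (p : ℕ) : sigSeq^[p] = ⇑(sigSeqLinear ^ p) := by
  rw [Module.End.coe_pow]
  rfl

lemma iterate_sigSeq_succ_apply (p : ℕ) (a : ℕ → ℝ) (n : ℕ) :
    sigSeq^[p + 1] a n = ∑ k ∈ range (n + 1), sigSeq^[p] a k := by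
  rw [Function.iterate_succ_apply']
  rfl

lemma iterate_sigSeq_apply_zero (p : ℕ) (a : ℕ → ℝ) : sigSeq^[p] a 0 = a 0 := by
  induction p with
  | zero => rfl
  | succ p ih => simp [iterate_sigSeq_succ_apply, ih]

lemma iterate_sigSeq_le_of_le {a b : ℕ → ℝ} {n : ℕ} (h : ∀ k ≤ n, a k ≤ b k) (p : ℕ) :
    sigSeq^[p] a n ≤ sigSeq^[p] b n := by
  induction p generalizing n with
  | zero => exact h n le_rfl
  | succ p ih =>
    simp only [iterate_sigSeq_succ_apply]
    gcongr with k hk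
    exact ih fun j hj => h j (hj.trans (Nat.lt_succ_iff.mp (mem_range.mp hk)))

lemma sigSeq_choose (r : ℕ) :
    sigSeq (fun k => ((k + r).choose r : ℝ)) = fun n => ((n + (r + 1)).choose (r + 1) : ℝ) := by
  ext n
  simp only [sigSeq, ← add_assoc]
  exact_mod_cast Nat.sum_range_add_choose n r

lemma iterate_sigSeq_choose (r p : ℕ) :
    sigSeq^[p] (fun k => ((k + r).choose r : ℝ)) =
      fun n => ((n + (r + p)).choose (r + p) : ℝ) := by
  induction p generalizing r with
  | zero => rfl
  | succ p ih =>
    rw [Function.iterate_succ_apply, sigSeq_choose, ih, add_right_comm r 1 p, add_assoc r p 1]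

lemma iterate_sigSeq_const (p n : ℕ) (c : ℝ) :
    sigSeq^[p] (fun _ => c) n = c * ((n + p).choose p : ℝ) := by
  have hc : (fun _ : ℕ => c) = c • fun k => ((k + 0).choose 0 : ℝ) := by
    ext k
    simp
  rw [hc, iterate_sigSeq_eq_pow, map_smul, ← iterate_sigSeq_eq_pow, iterate_sigSeq_choose]
  simp

lemma iterate_sigSeq_natCast (p n : ℕ) :
    sigSeq^[p] (fun k => (k : ℝ)) n = ((n + p).choose (p + 1) : ℝ) := by
  have hk : (fun k : ℕ => (k : ℝ)) =
      (fun k => ((k + 1).choose 1 : ℝ)) - fun k => ((k + 0).choose 0 : ℝ) := by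
    ext k
    simp
  rw [iterate_sigSeq_eq_pow, hk, map_sub, ← iterate_sigSeq_eq_pow, iterate_sigSeq_choose,
    iterate_sigSeq_choose, Pi.sub_apply, add_comm 1 p, ← add_assoc, Nat.choose_succ_succ', zero_add]
  push_cast
  ring

lemma iterate_sigSeq_const_mul (p n : ℕ) (c : ℝ) (a : ℕ → ℝ) :
    sigSeq^[p] (fun k => c * a k) n = c * sigSeq^[p] a n := by
  rw [show (fun k => c * a k) = c • a from rfl, iterate_sigSeq_eq_pow, map_smul]
  rfl

lemma iterate_sigSeq_affine (p n : ℕ) (c d : ℝ) :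
    sigSeq^[p] (fun k => c + d * k) n =
      c * ((n + p).choose p : ℝ) + d * ((n + p).choose (p + 1) : ℝ) := by
  rw [show (fun k : ℕ => c + d * k) = (fun _ : ℕ => c) + fun k : ℕ => d * (k : ℝ) from rfl,
    iterate_sigSeq_eq_pow, map_add, ← iterate_sigSeq_eq_pow, Pi.add_apply,
    iterate_sigSeq_const, iterate_sigSeq_const_mul, iterate_sigSeq_natCast]

lemma iterate_sigSeq_le_choose_mul {a : ℕ → ℝ} (hmono : Monotone a) (p n : ℕ) :
    sigSeq^[p] a n ≤ ((n + p).choose p : ℝ) * a n := by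
  calc sigSeq^[p] a n ≤ sigSeq^[p] (fun _ => a n) n :=
        iterate_sigSeq_le_of_le (fun _ hk => hmono hk) p
    _ = ((n + p).choose p : ℝ) * a n := by rw [iterate_sigSeq_const, mul_comm]

lemma chord_le_of_antitone_sub {a : ℕ → ℝ} (hconc : Antitone fun n => a (n + 1) - a n)
    {k n : ℕ} (hk : k ≤ n) : ((n : ℝ) - k) * a 0 + k * a n ≤ n * a k := by
  set d := a (k + 1) - a k
  have hleft : (k : ℝ) * d ≤ a k - a 0 := by
    rw [← sum_range_sub a k]
    simpa using card_nsmul_le_sum (range k) _ d fun j hj => hconc (mem_range.mp hj).le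
  have hright : a n - a k ≤ ((n : ℝ) - k) * d := by
    rw [← sum_Ico_sub a hk]
    simpa [Nat.cast_sub hk] using
      sum_le_card_nsmul (Ico k n) _ d fun j hj => hconc (mem_Ico.mp hj).1
  have hkn : (k : ℝ) ≤ n := by exact_mod_cast hk
  nlinarith [mul_le_mul_of_nonneg_left hleft (sub_nonneg.mpr hkn),
    mul_le_mul_of_nonneg_left hright k.cast_nonneg]

lemma choose_mul_le_iterate_sigSeq {a : ℕ → ℝ} (hconc : Antitone fun n => a (n + 1) - a n)
    (p n : ℕ) : ((n + p).choose p : ℝ) * (a n + p * a 0) ≤ (p + 1) * sigSeq^[p] a n := by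
  rcases n.eq_zero_or_pos with rfl | hn
  · apply le_of_eq
    simp [iterate_sigSeq_apply_zero]
    ring
  have hchord : sigSeq^[p] (fun k => n * a 0 + (a n - a 0) * k) n ≤
      sigSeq^[p] (fun k => n * a k) n :=
    iterate_sigSeq_le_of_le (fun k hk => by linarith [chord_le_of_antitone_sub hconc hk]) p
  rw [iterate_sigSeq_affine, iterate_sigSeq_const_mul] at hchord
  have hpascal : ((n + p).choose (p + 1) : ℝ) * (p + 1) = (n + p).choose p * n := by
    exact_mod_cast (Nat.add_sub_cancel n p) ▸ Nat.choose_succ_right_eq (n + p) p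
  have hn' : (0 : ℝ) < n := by exact_mod_cast hn
  refine le_of_mul_le_mul_left ?_ hn'
  linear_combination (↑p + 1) * hchord + (a 0 - a n) * hpascal

/-- Theorem 4.3: if `a` is a nondecreasing concave sequence, then for each `p, n ∈ ℕ`,
`(1/(p+1))·C(n+p,p)·a(n) + (p/(p+1))·C(n+p,p)·a(0) ≤ (Σ^p a)(n) ≤ C(n+p,p)·a(n)`. -/
theorem stmt9 (a : ℕ → ℝ) (hmono : Monotone a)
    (hconc : Antitone fun n => a (n + 1) - a n) :
    ∀ p n : ℕ,
      (1 / ((p : ℝ) + 1)) * (Nat.choose (n + p) p : ℝ) * a n +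
          ((p : ℝ) / ((p : ℝ) + 1)) * (Nat.choose (n + p) p : ℝ) * a 0 ≤ sigSeq^[p] a n ∧
      sigSeq^[p] a n ≤ (Nat.choose (n + p) p : ℝ) * a n := by
  intro p n
  refine ⟨?_, iterate_sigSeq_le_choose_mul hmono p n⟩
  have hp : (0 : ℝ) < p + 1 := by positivity
  calc (1 / ((p : ℝ) + 1)) * (Nat.choose (n + p) p : ℝ) * a n +
        ((p : ℝ) / ((p : ℝ) + 1)) * (Nat.choose (n + p) p : ℝ) * a 0
      = ((n + p).choose p : ℝ) * (a n + p * a 0) / (p + 1) := by field_simp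
    _ ≤ sigSeq^[p] a n := by
        rw [div_le_iff₀ hp, mul_comm _ (_ + 1)]
        exact choose_mul_le_iterate_sigSeq hconc p n
end

section
/- Let s : ℕ → ℝ be a real sequence satisfying s(0) ≥ 0, and let p ∈ ℕ be such that the sequence Δ^p s is concave and is not bounded from above. Then: (1) s(n) > 0 for every n ≥ 1; (2) s is strictly increasing; (3) s(n)/n^p → +∞ as n → +∞; (4) the sequence (s(n)/n^{p+1})_{n≥1} is bounded; (5) s(n+1)/s(n) → 1 as n → +∞; (6) Δ^{p+2} s ∈ ℓ¹, i.e., ∑_{n=0}^{∞} |(Δ^{p+2}s)(n)| converges. If in addition p ≥ 1, then the sequence s is also convex. -/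
/-!
Put `t = Δ^p s`; then `s` is the `p`-fold iterated partial sum of `t`. Concavity makes the
increments of `t` nonincreasing and unboundedness makes them positive, so `t` increases to `+∞`
with bounded increments, and `Δ²t ≤ 0` telescopes to a summable sequence. Taking partial sums
turns "strictly increasing from `a 0 ≥ 0`, `a n / n^j → ∞`, increments `O(n^j)`" into the same
property with `j + 1`. All claims about `s` follow from this property with `j = p`; for
`p ≥ 1` the increments of `s` are themselves partial sums of a monotone sequence.
-/

/-- The difference operator on real sequences: `(Δa)(0) = a(0)` and
`(Δa)(n) = a(n) − a(n−1)` for `n ≥ 1`. -/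
def dSeq (a : ℕ → ℝ) : ℕ → ℝ := fun n =>
  match n with
  | 0 => a 0
  | n + 1 => a (n + 1) - a n

open Filter Finset

def pSum (a : ℕ → ℝ) : ℕ → ℝ := fun n => ∑ k ∈ range (n + 1), a k

lemma pSum_zero (a : ℕ → ℝ) : pSum a 0 = a 0 := by simp [pSum]

lemma pSum_succ (a : ℕ → ℝ) (n : ℕ) : pSum a (n + 1) = pSum a n + a (n + 1) :=
  sum_range_succ a (n + 1)

lemma pSum_dSeq (a : ℕ → ℝ) : pSum (dSeq a) = a := by
  funext n
  induction n with
  | zero => simp [pSum, dSeq]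
  | succ n ih => rw [pSum_succ, ih]; simp [dSeq]

lemma iterate_pSum_iterate_dSeq (p : ℕ) (a : ℕ → ℝ) : pSum^[p] (dSeq^[p] a) = a := by
  induction p generalizing a with
  | zero => rfl
  | succ p ih =>
    rw [Function.iterate_succ_apply' dSeq, Function.iterate_succ_apply, pSum_dSeq, ih]

lemma iterate_dSeq_zero (p : ℕ) (a : ℕ → ℝ) : dSeq^[p] a 0 = a 0 := by
  induction p with
  | zero => rfl
  | succ p ih => rw [Function.iterate_succ_apply']; exact ih

lemma monotone_pSum_succ_sub {a : ℕ → ℝ} (ha : Monotone a) :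
    Monotone fun n => pSum a (n + 1) - pSum a n := by
  intro m n h
  simpa only [pSum_succ, add_sub_cancel_left] using ha (Nat.succ_le_succ h)

lemma mul_le_pSum {a : ℕ → ℝ} (h0 : ∀ n, 0 ≤ a n) (ha : Monotone a) {m n : ℕ}
    (hmn : m ≤ n) :
    ((n - m + 1 : ℕ) : ℝ) * a m ≤ pSum a n := by
  calc ((n - m + 1 : ℕ) : ℝ) * a m = #(Icc m n) • a m := by
        rw [Nat.card_Icc, nsmul_eq_mul, Nat.sub_add_comm hmn]
    _ ≤ ∑ k ∈ Icc m n, a k := card_nsmul_le_sum _ _ _ fun k hk => ha (mem_Icc.mp hk).1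
    _ ≤ pSum a n := sum_le_sum_of_subset_of_nonneg
        (fun k hk => by simp only [mem_Icc, mem_range] at hk ⊢; omega) fun k _ _ => h0 k

lemma tendsto_pSum_div_pow {a : ℕ → ℝ} {j : ℕ} (h0 : ∀ n, 0 ≤ a n) (ha : Monotone a)
    (ht : Tendsto (fun n => a n / (n : ℝ) ^ j) atTop atTop) :
    Tendsto (fun n => pSum a n / (n : ℝ) ^ (j + 1)) atTop atTop := by
  -- compare `pSum a n` with the upper half of its terms, each at least `a (n / 2)`
  refine tendsto_atTop_mono' _ ?_
    ((ht.comp (Nat.tendsto_div_const_atTop two_ne_zero)).atTop_div_const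
      (by positivity : (0 : ℝ) < 2 * 3 ^ j))
  filter_upwards [eventually_ge_atTop 2] with n hn
  set m := n / 2
  have hn0 : (0 : ℝ) < n := by positivity
  have hm3 : (n : ℝ) ≤ 3 * m := by exact_mod_cast (by omega : n ≤ 3 * m)
  have hm2 : (n : ℝ) / 2 ≤ ((n - m + 1 : ℕ) : ℝ) := by
    rw [div_le_iff₀ two_pos]; exact_mod_cast (by omega : n ≤ (n - m + 1) * 2)
  calc a m / (m : ℝ) ^ j / (2 * 3 ^ j) = a m / (2 * (3 * m) ^ j) := by ring
    _ ≤ a m / (2 * (n : ℝ) ^ j) := by gcongr; exact h0 m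
    _ = (n : ℝ) / 2 * a m / (n : ℝ) ^ (j + 1) := by field_simp; ring
    _ ≤ ((n - m + 1 : ℕ) : ℝ) * a m / (n : ℝ) ^ (j + 1) := by gcongr; exact h0 m
    _ ≤ pSum a n / (n : ℝ) ^ (j + 1) := by
        gcongr; exact mul_le_pSum h0 ha (Nat.div_le_self n 2)

lemma le_add_mul_pow_of_sub_le {a : ℕ → ℝ} {C : ℝ} {j : ℕ} (hC : 0 ≤ C)
    (h : ∀ n, a (n + 1) - a n ≤ C * ((n : ℝ) + 1) ^ j) (n : ℕ) :
    a n ≤ a 0 + C * (n : ℝ) ^ (j + 1) := by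
  induction n with
  | zero => simp
  | succ n ih =>
    have hpow : (n : ℝ) ^ (j + 1) + ((n : ℝ) + 1) ^ j ≤ ((n : ℝ) + 1) ^ (j + 1) := by
      calc (n : ℝ) ^ (j + 1) + ((n : ℝ) + 1) ^ j
          = n * (n : ℝ) ^ j + ((n : ℝ) + 1) ^ j := by ring
        _ ≤ n * ((n : ℝ) + 1) ^ j + ((n : ℝ) + 1) ^ j := by gcongr; linarith
        _ = ((n : ℝ) + 1) ^ (j + 1) := by ring
    push_cast
    nlinarith [h n]

section concave

variable {t : ℕ → ℝ}

lemma le_of_antitone_sub (hconc : Antitone fun n => t (n + 1) - t n) {n : ℕ}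
    (hn : t (n + 1) - t n ≤ 0) {k : ℕ} (hk : n ≤ k) : t k ≤ t n := by
  induction k, hk using Nat.le_induction with
  | base => rfl
  | succ k hk ih => linarith [hconc hk]

lemma sub_pos_of_antitone_of_not_bddAbove (hconc : Antitone fun n => t (n + 1) - t n)
    (hub : ¬BddAbove (Set.range t)) (n : ℕ) : 0 < t (n + 1) - t n := by
  by_contra! hn
  obtain ⟨M, hM⟩ := ((Set.finite_Iic n).image t).bddAbove
  refine hub ⟨M, Set.forall_mem_range.2 fun k => ?_⟩
  rcases le_total k n with hk | hk
  · exact hM ⟨k, hk, rfl⟩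
  · exact (le_of_antitone_sub hconc hn hk).trans (hM ⟨n, Set.mem_Iic.2 le_rfl, rfl⟩)

lemma summable_abs_dSeq_dSeq (hconc : Antitone fun n => t (n + 1) - t n)
    (hd : ∀ n, 0 ≤ t (n + 1) - t n) : Summable fun n => |dSeq (dSeq t) n| := by
  rw [← summable_nat_add_iff 2]
  have habs (n : ℕ) : |dSeq (dSeq t) (n + 2)| = (t (n + 1) - t n) - (t (n + 2) - t (n + 1)) := by
    show |(t (n + 2) - t (n + 1)) - (t (n + 1) - t n)| = _
    rw [abs_sub_comm]; exact abs_of_nonneg (sub_nonneg.2 (hconc n.le_succ))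
  simp only [habs]
  refine summable_of_sum_range_le (c := t 1 - t 0) (fun n => sub_nonneg.2 (hconc n.le_succ))
    fun n => ?_
  rw [sum_range_sub' (fun n => t (n + 1) - t n)]
  linarith [hd n]

end concave

/-- `a` increases strictly from a nonnegative start, faster than `n ^ j`, with increments
`O(n ^ j)`; hence `a n = O(n ^ (j + 1))`. -/
structure PowGrowth (a : ℕ → ℝ) (j : ℕ) : Prop where
  nonneg_zero : 0 ≤ a 0
  strictMono : StrictMono a
  tendsto_div_pow : Tendsto (fun n => a n / (n : ℝ) ^ j) atTop atTop
  exists_sub_le : ∃ C, 0 ≤ C ∧ ∀ n, a (n + 1) - a n ≤ C * ((n : ℝ) + 1) ^ j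

namespace PowGrowth

variable {a : ℕ → ℝ} {j : ℕ}

lemma nonneg (h : PowGrowth a j) (n : ℕ) : 0 ≤ a n :=
  h.nonneg_zero.trans (h.strictMono.monotone n.zero_le)

lemma pos (h : PowGrowth a j) {n : ℕ} (hn : 1 ≤ n) : 0 < a n :=
  h.nonneg_zero.trans_lt (h.strictMono hn)

lemma exists_abs_div_pow_le (h : PowGrowth a j) :
    ∃ M, ∀ n, 1 ≤ n → |a n / (n : ℝ) ^ (j + 1)| ≤ M := by
  obtain ⟨C, hC, hsub⟩ := h.exists_sub_le
  refine ⟨a 0 + C, fun n hn => ?_⟩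
  have hn1 : (1 : ℝ) ≤ (n : ℝ) ^ (j + 1) := one_le_pow₀ (by exact_mod_cast hn)
  rw [abs_of_nonneg (div_nonneg (h.nonneg n) (by positivity)), div_le_iff₀ (by positivity)]
  nlinarith [le_add_mul_pow_of_sub_le hC hsub n, h.nonneg_zero]

lemma tendsto_succ_div (h : PowGrowth a j) :
    Tendsto (fun n => a (n + 1) / a n) atTop (nhds 1) := by
  obtain ⟨C, hC, hsub⟩ := h.exists_sub_le
  -- `a (n + 1) / a n - 1 ≤ C (n + 1) ^ j / a n ≤ 2 ^ j C · n ^ j / a n → 0`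
  have hlim : Tendsto (fun n => 2 ^ j * C * (a n / (n : ℝ) ^ j)⁻¹) atTop (nhds 0) := by
    simpa using h.tendsto_div_pow.inv_tendsto_atTop.const_mul (2 ^ j * C)
  have hrel : Tendsto (fun n => (a (n + 1) - a n) / a n) atTop (nhds 0) := by
    refine squeeze_zero' ?_ ?_ hlim
    · filter_upwards [eventually_ge_atTop 1] with n hn
      exact div_nonneg (sub_nonneg.2 (h.strictMono n.lt_succ_self).le) (h.pos hn).le
    · filter_upwards [eventually_ge_atTop 1] with n hn
      have hn1 : (1 : ℝ) ≤ n := by exact_mod_cast hn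
      have han := h.pos hn
      calc (a (n + 1) - a n) / a n ≤ C * ((n : ℝ) + 1) ^ j / a n := by gcongr; exact hsub n
        _ ≤ C * (2 * (n : ℝ)) ^ j / a n := by gcongr; linarith
        _ = 2 ^ j * C * (a n / (n : ℝ) ^ j)⁻¹ := by rw [inv_div, mul_pow]; ring
  have hsum : Tendsto (fun n => 1 + (a (n + 1) - a n) / a n) atTop (nhds 1) := by
    simpa using hrel.const_add 1
  refine hsum.congr' ?_
  filter_upwards [eventually_ge_atTop 1] with n hn
  field_simp [(h.pos hn).ne']
  ring

lemma pSum (h : PowGrowth a j) : PowGrowth (pSum a) (j + 1) where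
  nonneg_zero := (pSum_zero a).symm ▸ h.nonneg_zero
  strictMono := strictMono_nat_of_lt_succ fun n => by
    rw [pSum_succ]; linarith [h.pos n.succ_pos]
  tendsto_div_pow := tendsto_pSum_div_pow h.nonneg h.strictMono.monotone h.tendsto_div_pow
  exists_sub_le := by
    obtain ⟨C, hC, hsub⟩ := h.exists_sub_le
    refine ⟨a 0 + C, add_nonneg h.nonneg_zero hC, fun n => ?_⟩
    have hn1 : (1 : ℝ) ≤ ((n : ℝ) + 1) ^ (j + 1) :=
      one_le_pow₀ (by linarith [n.cast_nonneg (α := ℝ)])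
    rw [pSum_succ, add_sub_cancel_left]
    have := le_add_mul_pow_of_sub_le hC hsub (n + 1)
    push_cast at this
    nlinarith [h.nonneg_zero]

lemma iterate_pSum (h : PowGrowth a j) (k : ℕ) : PowGrowth (_root_.pSum^[k] a) (j + k) := by
  induction k with
  | zero => exact h
  | succ k ih => rw [Function.iterate_succ_apply']; exact ih.pSum

end PowGrowth

lemma powGrowth_zero_of_antitone_sub {t : ℕ → ℝ} (h0 : 0 ≤ t 0)
    (hconc : Antitone fun n => t (n + 1) - t n) (hub : ¬BddAbove (Set.range t)) :
    PowGrowth t 0 := by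
  have hd := sub_pos_of_antitone_of_not_bddAbove hconc hub
  have hmono : StrictMono t := strictMono_nat_of_lt_succ fun n => sub_pos.1 (hd n)
  exact
  { nonneg_zero := h0
    strictMono := hmono
    tendsto_div_pow := by simpa using tendsto_atTop_atTop_of_monotone' hmono.monotone hub
    exists_sub_le := ⟨t 1 - t 0, (hd 0).le, fun n => by simpa using hconc n.zero_le⟩ }

/-- Theorem 4.7: let `s(0) ≥ 0` and let `p ∈ ℕ` be such that `Δ^p s` is concave and not
bounded from above. Then (1) `s(n) > 0` for `n ≥ 1`; (2) `s` is strictly increasing;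
(3) `s(n)/n^p → +∞`; (4) `(s(n)/n^{p+1})_{n≥1}` is bounded; (5) `s(n+1)/s(n) → 1`;
(6) `Δ^{p+2} s ∈ ℓ¹`. If moreover `p ≥ 1` then `s` is convex. -/
theorem stmt12 (s : ℕ → ℝ) (p : ℕ) (h0 : 0 ≤ s 0)
    (hconc : Antitone fun n => dSeq^[p] s (n + 1) - dSeq^[p] s n)
    (hub : ¬∃ M : ℝ, ∀ n, dSeq^[p] s n ≤ M) :
    (∀ n : ℕ, 1 ≤ n → 0 < s n) ∧
    StrictMono s ∧
    Filter.Tendsto (fun n : ℕ => s n / (n : ℝ) ^ p) Filter.atTop Filter.atTop ∧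
    (∃ M : ℝ, ∀ n : ℕ, 1 ≤ n → |s n / (n : ℝ) ^ (p + 1)| ≤ M) ∧
    Filter.Tendsto (fun n => s (n + 1) / s n) Filter.atTop (nhds 1) ∧
    Summable (fun n => |dSeq^[p + 2] s n|) ∧
    (1 ≤ p → Monotone fun n => s (n + 1) - s n) := by
  set t := dSeq^[p] s with ht
  have hub' : ¬BddAbove (Set.range t) := by simpa [bddAbove_def] using hub
  have htg : PowGrowth t 0 :=
    powGrowth_zero_of_antitone_sub (h0.trans (iterate_dSeq_zero p s).ge) hconc hub'
  have hs : PowGrowth s p := by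
    simpa only [zero_add, ht, iterate_pSum_iterate_dSeq] using htg.iterate_pSum p
  refine ⟨fun n => hs.pos, hs.strictMono, hs.tendsto_div_pow, hs.exists_abs_div_pow_le,
    hs.tendsto_succ_div, ?_, fun hp => ?_⟩
  · rw [add_comm, Function.iterate_add_apply]
    exact summable_abs_dSeq_dSeq hconc
      fun n => (sub_pos_of_antitone_of_not_bddAbove hconc hub' n).le
  · obtain ⟨q, rfl⟩ := Nat.exists_eq_add_of_le' hp
    rw [← iterate_pSum_iterate_dSeq (q + 1) s, Function.iterate_succ_apply']
    exact monotone_pSum_succ_sub (htg.iterate_pSum q).strictMono.monotone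
end

section
/- Let b : ℕ → ℝ be a real sequence which is not bounded from above and such that H(b) < +∞. Then H(b) ≥ 1. Moreover, setting p = H(b) − 1, the sequence b has a majorant s : ℕ → ℝ such that s(0) ≥ 0, the sequence Δ^p s is concave and not bounded from above, and limsup_{n→+∞} b(n)/s(n) lies in the interval [1/H(b), 1]. -/
/-- The index `H(a) ∈ ℕ ∪ {+∞}`: the infimum of the set of `m ∈ ℕ` for which the
sequence `(a(n)/n^m)_{n≥1}` is bounded from above. -/
noncomputable def Hindex (a : ℕ → ℝ) : ℕ∞ :=
  sInf {m : ℕ∞ | ∃ k : ℕ, m = (k : ℕ∞) ∧ ∃ M : ℝ, ∀ n : ℕ, 1 ≤ n → a n / (n : ℝ) ^ k ≤ M}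

open Filter Finset Topology
open scoped Nat

theorem Nat.sum_range_add_choose_succ (n q : ℕ) :
    ∑ j ∈ range (n + 1), (j + q).choose (q + 1) = (n + q + 1).choose (q + 2) := by
  induction n with
  | zero => simp
  | succ n ih =>
    rw [sum_range_succ, ih, show n + 1 + q = n + q + 1 by ring, add_comm]
    exact (Nat.choose_succ_succ' _ _).symm

def partialSums (a : ℕ → ℝ) (n : ℕ) : ℝ := ∑ k ∈ range (n + 1), a k

section partialSums

variable {a : ℕ → ℝ}

theorem dSeq_partialSums (a : ℕ → ℝ) : dSeq (partialSums a) = a := by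
  funext n
  cases n with
  | zero => simp [dSeq, partialSums]
  | succ n => simp [dSeq, partialSums, sum_range_succ]

theorem dSeq_iterate_partialSums_iterate (q : ℕ) (a : ℕ → ℝ) :
    dSeq^[q] (partialSums^[q] a) = a := by
  induction q with
  | zero => rfl
  | succ q ih =>
    rw [Function.iterate_succ_apply' partialSums, Function.iterate_succ_apply, dSeq_partialSums,
      ih]

theorem partialSums_iterate_zero (q : ℕ) (a : ℕ → ℝ) : partialSums^[q] a 0 = a 0 := by
  induction q with
  | zero => rfl
  | succ q ih => simp [Function.iterate_succ_apply', partialSums, ih]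

theorem partialSums_iterate_nonneg (ha : 0 ≤ a) (q : ℕ) : 0 ≤ partialSums^[q] a := by
  induction q with
  | zero => exact ha
  | succ q ih =>
    rw [Function.iterate_succ_apply']
    exact fun n => sum_nonneg fun k _ => ih k

theorem le_partialSums_iterate (ha : 0 ≤ a) (q : ℕ) : a ≤ partialSums^[q] a := by
  induction q with
  | zero => exact le_rfl
  | succ q ih =>
    intro n
    rw [Function.iterate_succ_apply']
    exact (ih n).trans
      (single_le_sum (fun k _ => partialSums_iterate_nonneg ha q k) (self_mem_range_succ n))

theorem partialSums_iterate_le_choose_mul (ha : Monotone a) (q n : ℕ) :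
    partialSums^[q] a n ≤ (n + q).choose q * a n := by
  induction q generalizing n with
  | zero => simp
  | succ q ih =>
    rw [Function.iterate_succ_apply']
    calc partialSums (partialSums^[q] a) n
        ≤ ∑ j ∈ range (n + 1), ((j + q).choose q : ℝ) * a n :=
          sum_le_sum fun j hj => (ih j).trans <|
            mul_le_mul_of_nonneg_left (ha (mem_range_succ_iff.mp hj)) (Nat.cast_nonneg _)
      _ = (n + (q + 1)).choose (q + 1) * a n := by
          rw [← sum_mul, ← Nat.cast_sum, Nat.sum_range_add_choose, add_assoc]

theorem choose_mul_le_partialSums_iterate {N : ℕ} (hchord : ∀ j ≤ N, j * a N ≤ N * a j)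
    (q : ℕ) {n : ℕ} (hn : n ≤ N) :
    (n + q).choose (q + 1) * a N ≤ N * partialSums^[q] a n := by
  induction q generalizing n with
  | zero => simpa using hchord n hn
  | succ q ih =>
    rw [Function.iterate_succ_apply', partialSums, mul_sum]
    calc ((n + (q + 1)).choose (q + 1 + 1) : ℝ) * a N
        = ∑ j ∈ range (n + 1), ((j + q).choose (q + 1) : ℝ) * a N := by
          rw [← sum_mul, ← Nat.cast_sum, Nat.sum_range_add_choose_succ, ← add_assoc]
      _ ≤ _ := sum_le_sum fun j hj => ih ((mem_range_succ_iff.mp hj).trans hn)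

end partialSums

section concave

variable {t : ℕ → ℝ}

theorem mul_sub_le_sub_of_antitone_sub (hd : Antitone fun n => t (n + 1) - t n) (n : ℕ) :
    n * (t (n + 1) - t n) ≤ t n - t 0 := by
  induction n with
  | zero => simp
  | succ n ih =>
    have hdn : t (n + 1 + 1) - t (n + 1) ≤ t (n + 1) - t n := hd (Nat.le_succ n)
    push_cast
    nlinarith [mul_le_mul_of_nonneg_left hdn (by positivity : (0 : ℝ) ≤ n + 1)]

theorem mul_le_mul_of_antitone_sub (hd : Antitone fun n => t (n + 1) - t n) (h0 : 0 ≤ t 0)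
    {j N : ℕ} (hjN : j ≤ N) : j * t N ≤ N * t j := by
  induction N, hjN using Nat.le_induction with
  | base => exact le_rfl
  | succ N hjN ih =>
    have hstep := mul_sub_le_sub_of_antitone_sub hd N
    rcases N.eq_zero_or_pos with rfl | hN
    · obtain rfl : j = 0 := Nat.le_zero.mp hjN
      simpa using h0
    have hN' : (0 : ℝ) < N := by exact_mod_cast hN
    have hj : (j : ℝ) ≤ N := by exact_mod_cast hjN
    push_cast
    refine le_of_mul_le_mul_left ?_ hN'
    nlinarith [mul_le_mul_of_nonneg_left hstep (Nat.cast_nonneg j)]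

end concave

def IsAffineMajorant (c : ℕ → ℝ) (α β : ℝ) : Prop := ∀ k : ℕ, c k ≤ α * k + β

/-- The least concave majorant, as the pointwise infimum of the affine majorants. -/
noncomputable def concaveMajorant (c : ℕ → ℝ) (n : ℕ) : ℝ :=
  sInf {y | ∃ α β, IsAffineMajorant c α β ∧ y = α * n + β}

section concaveMajorant

variable {c : ℕ → ℝ}

theorem concaveMajorant_le {α β : ℝ} (h : IsAffineMajorant c α β) (n : ℕ) :
    concaveMajorant c n ≤ α * n + β :=
  csInf_le ⟨c n, by rintro _ ⟨α, β, h, rfl⟩; exact h n⟩ ⟨α, β, h, rfl⟩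

theorem le_concaveMajorant_of_forall (hc : ∃ α β, IsAffineMajorant c α β) {n : ℕ} {x : ℝ}
    (hx : ∀ α β, IsAffineMajorant c α β → x ≤ α * n + β) :
    x ≤ concaveMajorant c n := by
  obtain ⟨α, β, h⟩ := hc
  exact le_csInf ⟨_, α, β, h, rfl⟩ (by rintro _ ⟨α, β, h, rfl⟩; exact hx α β h)

theorem le_concaveMajorant (hc : ∃ α β, IsAffineMajorant c α β) (n : ℕ) :
    c n ≤ concaveMajorant c n :=
  le_concaveMajorant_of_forall hc fun _ _ h => h n

theorem concaveMajorant_antitone_sub (hc : ∃ α β, IsAffineMajorant c α β) :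
    Antitone fun n => concaveMajorant c (n + 1) - concaveMajorant c n := by
  refine antitone_nat_of_succ_le fun n => ?_
  have hmid : (concaveMajorant c n + concaveMajorant c (n + 2)) / 2 ≤ concaveMajorant c (n + 1) :=
    le_concaveMajorant_of_forall hc fun α β h => by
      have h₀ := concaveMajorant_le h n
      have h₂ := concaveMajorant_le h (n + 2)
      push_cast at h₂ ⊢
      linarith
  linarith

theorem concaveMajorant_monotone (hc : ∃ α β, IsAffineMajorant c α β)
    (hunb : ¬BddAbove (Set.range c)) : Monotone (concaveMajorant c) := by
  refine monotone_nat_of_le_succ fun n => le_concaveMajorant_of_forall hc fun α β h => ?_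
  have hα : 0 ≤ α := by
    by_contra! hα
    refine hunb ⟨β, ?_⟩
    rintro _ ⟨k, rfl⟩
    nlinarith [h k, Nat.cast_nonneg (α := ℝ) k]
  calc concaveMajorant c n ≤ α * n + β := concaveMajorant_le h n
    _ ≤ α * (n + 1 : ℕ) + β := by push_cast; nlinarith

theorem concaveMajorant_le_mul_add (hc : ∃ α β, IsAffineMajorant c α β) {u v : ℝ}
    (hu : 0 < u) (h : ∀ k, c k ≤ u * concaveMajorant c k + v) (n : ℕ) :
    concaveMajorant c n ≤ u * concaveMajorant c n + v := by
  have key : (concaveMajorant c n - v) / u ≤ concaveMajorant c n :=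
    le_concaveMajorant_of_forall hc fun α β hαβ => by
      have hmaj : IsAffineMajorant c (u * α) (u * β + v) := fun k =>
        (h k).trans (by nlinarith [concaveMajorant_le hαβ k])
      rw [div_le_iff₀ hu]
      nlinarith [concaveMajorant_le hmaj n]
  rw [div_le_iff₀ hu] at key
  linarith

theorem exists_concaveMajorant_le_mul (hc : ∃ α β, IsAffineMajorant c α β)
    (hunb : ¬BddAbove (Set.range c)) (hc0 : 0 ≤ c) {κ : ℝ} (hκ : 1 < κ) (B : ℝ) :
    ∃ n, B ≤ c n ∧ concaveMajorant c n ≤ κ * c n := by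
  by_contra! hfar
  have hκ0 : 0 < κ := by linarith
  have hcle : ∀ k, c k ≤ κ⁻¹ * concaveMajorant c k + max B 0 := by
    intro k
    rcases lt_or_ge (c k) B with hk | hk
    · have : 0 ≤ κ⁻¹ * concaveMajorant c k :=
        mul_nonneg (inv_nonneg.mpr hκ0.le) ((hc0 k).trans (le_concaveMajorant hc k))
      linarith [le_max_left B 0]
    · have : c k ≤ κ⁻¹ * concaveMajorant c k := by
        rw [le_inv_mul_iff₀ hκ0]
        exact (hfar k hk).le
      linarith [le_max_right B 0]
  refine hunb ⟨max B 0 / (1 - κ⁻¹), ?_⟩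
  rintro _ ⟨k, rfl⟩
  have hκ' : 0 < 1 - κ⁻¹ := sub_pos.mpr (inv_lt_one_of_one_lt₀ hκ)
  rw [le_div_iff₀ hκ']
  nlinarith [concaveMajorant_le_mul_add hc (inv_pos.mpr hκ0) hcle k, le_concaveMajorant hc k,
    hc0 k]

end concaveMajorant

theorem EReal.le_limsup_coe_of_frequently {ι : Type*} {f : Filter ι} {x : ι → ℝ} {L : ℝ}
    (hL : 0 < L) (h : ∀ r, 0 < r → r < L → ∃ᶠ i in f, r ≤ x i) :
    (L : EReal) ≤ limsup (fun i => (x i : EReal)) f := by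
  refine le_of_forall_lt fun y hy => ?_
  obtain ⟨r, hyr, hrL⟩ := EReal.exists_between_coe_real hy
  have hr : max r (L / 2) < L := max_lt (EReal.coe_lt_coe_iff.mp hrL) (by linarith)
  have hfreq : ∃ᶠ i in f, ((max r (L / 2) : ℝ) : EReal) ≤ x i :=
    (h _ (lt_max_of_lt_right (by positivity)) hr).mono fun i hi => EReal.coe_le_coe_iff.mpr hi
  exact hyr.trans_le ((EReal.coe_le_coe_iff.mpr (le_max_left r (L / 2))).trans
    (le_limsup_of_frequently_le hfreq))

theorem EReal.limsup_coe_div_le_one {ι : Type*} {f : Filter ι} {b s : ι → ℝ} (hbs : b ≤ s)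
    (hs : ∀ᶠ i in f, 0 < s i) : limsup (fun i => ((b i / s i : ℝ) : EReal)) f ≤ 1 :=
  limsup_le_of_le (by isBoundedDefault) <|
    hs.mono fun i hi => EReal.coe_le_coe_iff.mpr (div_le_one_of_le₀ (hbs i) hi.le)

theorem eventually_mul_add_pow_le (p : ℕ) {γ : ℝ} (hγ : γ < 1) :
    ∀ᶠ n : ℕ in atTop, γ * ((n : ℝ) + p) ^ p ≤ (n : ℝ) ^ p := by
  have hlim : Tendsto (fun n : ℕ => ((n : ℝ) / (n + p)) ^ p) atTop (𝓝 1) := by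
    simpa using (tendsto_natCast_div_add_atTop (p : ℝ)).pow p
  filter_upwards [hlim.eventually_const_lt hγ, eventually_ge_atTop 1] with n hn hn1
  have : (0 : ℝ) < n + p := by positivity
  rw [div_pow, lt_div_iff₀ (by positivity)] at hn
  exact hn.le

section majorant

variable {b t : ℕ → ℝ} {p : ℕ}

theorem le_partialSums_iterate_of_concave (ht0 : 0 ≤ t)
    (hd : Antitone fun n => t (n + 1) - t n) (h0 : b 0 ≤ t 0)
    (hbt : ∀ n, 1 ≤ n → ((p + 1)! : ℝ) * b n / (n : ℝ) ^ p ≤ t n) (n : ℕ) :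
    b n ≤ partialSums^[p] t n := by
  rcases n.eq_zero_or_pos with rfl | hn
  · rwa [partialSums_iterate_zero]
  have hn' : (0 : ℝ) < n := by exact_mod_cast hn
  have hpow : (n : ℝ) ^ (p + 1) ≤ (p + 1)! * (n + p).choose (p + 1) := by
    have h := Nat.pow_sub_le_descFactorial (n + p) (p + 1)
    rw [show n + p + 1 - (p + 1) = n by omega, Nat.descFactorial_eq_factorial_mul_choose] at h
    exact_mod_cast h
  have hchord := choose_mul_le_partialSums_iterate
    (fun j hj => mul_le_mul_of_antitone_sub hd (ht0 0) hj) p (le_refl n)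
  have key : ((p + 1)! : ℝ) * (n * b n) ≤ (p + 1)! * (n * partialSums^[p] t n) :=
    calc ((p + 1)! : ℝ) * (n * b n) = n ^ (p + 1) * ((p + 1)! * b n / n ^ p) := by
          field_simp
          ring
      _ ≤ n ^ (p + 1) * t n := mul_le_mul_of_nonneg_left (hbt n hn) (by positivity)
      _ ≤ ((p + 1)! * (n + p).choose (p + 1)) * t n := mul_le_mul_of_nonneg_right hpow (ht0 n)
      _ = (p + 1)! * ((n + p).choose (p + 1) * t n) := by ring
      _ ≤ (p + 1)! * (n * partialSums^[p] t n) :=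
          mul_le_mul_of_nonneg_left hchord (by positivity)
  exact le_of_mul_le_mul_left (le_of_mul_le_mul_left key (by positivity)) hn'

theorem pow_mul_partialSums_iterate_le (ht : Monotone t) {m : ℕ} (hm : 1 ≤ m) (hb : 0 ≤ b m)
    {κ : ℝ} (hκ : 0 ≤ κ) (htouch : t m ≤ κ * ((p + 1)! * b m / (m : ℝ) ^ p)) :
    (m : ℝ) ^ p * partialSums^[p] t m ≤ κ * (p + 1) * ((m : ℝ) + p) ^ p * b m := by
  have hm' : (0 : ℝ) < m := by exact_mod_cast hm
  have hdesc : (p ! : ℝ) * (m + p).choose p ≤ ((m : ℝ) + p) ^ p := by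
    have h := Nat.descFactorial_le_pow (m + p) p
    rw [Nat.descFactorial_eq_factorial_mul_choose] at h
    exact_mod_cast h
  have htm : (m : ℝ) ^ p * t m ≤ κ * (p + 1)! * b m :=
    calc (m : ℝ) ^ p * t m ≤ m ^ p * (κ * ((p + 1)! * b m / m ^ p)) :=
          mul_le_mul_of_nonneg_left htouch (by positivity)
      _ = κ * (p + 1)! * b m := by field_simp
  calc (m : ℝ) ^ p * partialSums^[p] t m ≤ m ^ p * ((m + p).choose p * t m) :=
        mul_le_mul_of_nonneg_left (partialSums_iterate_le_choose_mul ht p m) (by positivity)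
    _ = (m + p).choose p * (m ^ p * t m) := by ring
    _ ≤ (m + p).choose p * (κ * (p + 1)! * b m) := by gcongr
    _ = κ * (p + 1) * (p ! * (m + p).choose p) * b m := by push_cast [Nat.factorial_succ]; ring
    _ ≤ κ * (p + 1) * ((m : ℝ) + p) ^ p * b m := by gcongr

-- At `n = 0`, where `n ^ p` is a junk value, the term is replaced by `max (b 0) 0`.
noncomputable def scaledRunningMax (b : ℕ → ℝ) (p : ℕ) : ℕ → ℝ :=
  partialSups (Function.update (fun n => ((p + 1)! : ℝ) * b n / (n : ℝ) ^ p) 0 (max (b 0) 0))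

theorem scaledRunningMax_monotone : Monotone (scaledRunningMax b p) :=
  (partialSups _).monotone

theorem scaledRunningMax_zero : scaledRunningMax b p 0 = max (b 0) 0 := by
  simp [scaledRunningMax]

theorem scaledRunningMax_nonneg : 0 ≤ scaledRunningMax b p := fun n =>
  (le_max_right _ _).trans (scaledRunningMax_zero.symm.trans_le
    (scaledRunningMax_monotone (Nat.zero_le n)))

theorem le_scaledRunningMax {n : ℕ} (hn : 1 ≤ n) :
    ((p + 1)! : ℝ) * b n / (n : ℝ) ^ p ≤ scaledRunningMax b p n := by
  have h := le_partialSups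
    (Function.update (fun n => ((p + 1)! : ℝ) * b n / (n : ℝ) ^ p) 0 (max (b 0) 0)) n
  rwa [Function.update_of_ne (by omega)] at h

theorem scaledRunningMax_eq_or_exists (n : ℕ) : scaledRunningMax b p n = max (b 0) 0 ∨
    ∃ m, 1 ≤ m ∧ m ≤ n ∧ scaledRunningMax b p n = (p + 1)! * b m / (m : ℝ) ^ p := by
  obtain ⟨m, hm, heq⟩ := exists_mem_eq_sup' nonempty_Iic
    (Function.update (fun n => ((p + 1)! : ℝ) * b n / (n : ℝ) ^ p) 0 (max (b 0) 0))
  rw [scaledRunningMax, partialSups_apply]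
  rcases eq_or_ne m 0 with rfl | hm0
  · exact .inl (by simpa using heq)
  · exact .inr ⟨m, by omega, mem_Iic.mp hm, heq.trans (Function.update_of_ne hm0 _ _)⟩

theorem scaled_le_of_le_mul_pow {M : ℝ} {n : ℕ} (hn : 1 ≤ n)
    (hbM : b n ≤ M * (n : ℝ) ^ (p + 1)) :
    ((p + 1)! : ℝ) * b n / (n : ℝ) ^ p ≤ (p + 1)! * M * n := by
  have hn' : (0 : ℝ) < n := by exact_mod_cast hn
  rw [div_le_iff₀ (by positivity), mul_assoc, mul_assoc]
  gcongr
  exact hbM.trans_eq (by ring)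

theorem scaledRunningMax_isAffineMajorant {M : ℝ} (hM : 0 ≤ M)
    (hbM : ∀ n, 1 ≤ n → b n ≤ M * (n : ℝ) ^ (p + 1)) :
    IsAffineMajorant (scaledRunningMax b p) ((p + 1)! * M) (max (b 0) 0) := by
  intro n
  have hAM : (0 : ℝ) ≤ (p + 1)! * M := by positivity
  rcases scaledRunningMax_eq_or_exists n with h | ⟨m, hm, hmn, h⟩
  · rw [h]
    nlinarith [Nat.cast_nonneg (α := ℝ) n]
  · rw [h]
    have hmn' : (m : ℝ) ≤ n := by exact_mod_cast hmn
    nlinarith [scaled_le_of_le_mul_pow hm (hbM m hm), le_max_right (b 0) 0]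

theorem not_bddAbove_scaledRunningMax (hunb : ∀ C, ∃ n, 1 ≤ n ∧ C < b n / (n : ℝ) ^ p) :
    ¬BddAbove (Set.range (scaledRunningMax b p)) := by
  rintro ⟨C, hC⟩
  obtain ⟨n, hn, hlt⟩ := hunb (C / (p + 1)!)
  have hle := (le_scaledRunningMax hn).trans (hC ⟨n, rfl⟩)
  rw [div_lt_iff₀' (by positivity), ← mul_div_assoc] at hlt
  linarith

end majorant

section growth

variable {b : ℕ → ℝ} {p : ℕ} {M : ℝ} (hM : 0 ≤ M)
  (hbM : ∀ n, 1 ≤ n → b n ≤ M * (n : ℝ) ^ (p + 1))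
  (hunb : ∀ C, ∃ n, 1 ≤ n ∧ C < b n / (n : ℝ) ^ p)
include hM hbM hunb

theorem frequently_concaveMajorant_scaledRunningMax_le {κ : ℝ} (hκ : 1 < κ) :
    ∃ᶠ m in atTop, 1 ≤ m ∧ 0 < b m ∧
      concaveMajorant (scaledRunningMax b p) m ≤ κ * ((p + 1)! * b m / (m : ℝ) ^ p) := by
  have hc := scaledRunningMax_isAffineMajorant hM hbM
  have hAM : (0 : ℝ) ≤ (p + 1)! * M := by positivity
  rw [frequently_atTop]
  intro Q
  obtain ⟨n, hBn, htn⟩ := exists_concaveMajorant_le_mul ⟨_, _, hc⟩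
    (not_bddAbove_scaledRunningMax hunb) scaledRunningMax_nonneg hκ
    ((p + 1)! * M * Q + max (b 0) 0 + 1)
  have hQ : (0 : ℝ) ≤ (p + 1)! * M * Q := by positivity
  -- the touching value is attained at an index `m ≤ n`, which is large because the scaled
  -- values grow at most linearly
  obtain h0 | ⟨m, hm, hmn, hnm⟩ := scaledRunningMax_eq_or_exists (b := b) (p := p) n
  · linarith
  have hwm := scaled_le_of_le_mul_pow hm (hbM m hm)
  refine ⟨m, ?_, hm, ?_, ?_⟩
  · by_contra! hmQ
    have : ((p + 1)! : ℝ) * M * m ≤ (p + 1)! * M * Q :=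
      mul_le_mul_of_nonneg_left (by exact_mod_cast hmQ.le) hAM
    linarith [le_max_right (b 0) 0]
  · by_contra! hbm
    have : ((p + 1)! : ℝ) * b m / (m : ℝ) ^ p ≤ 0 :=
      div_nonpos_of_nonpos_of_nonneg (mul_nonpos_of_nonneg_of_nonpos (by positivity) hbm)
        (by positivity)
    linarith [le_max_right (b 0) 0]
  · calc concaveMajorant (scaledRunningMax b p) m
        ≤ concaveMajorant (scaledRunningMax b p) n :=
          concaveMajorant_monotone ⟨_, _, hc⟩ (not_bddAbove_scaledRunningMax hunb) hmn
      _ ≤ κ * scaledRunningMax b p n := htn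
      _ = κ * ((p + 1)! * b m / (m : ℝ) ^ p) := by rw [hnm]

theorem eventually_partialSums_concaveMajorant_scaledRunningMax_pos :
    ∀ᶠ n in atTop, 0 < partialSums^[p] (concaveMajorant (scaledRunningMax b p)) n := by
  have hc := scaledRunningMax_isAffineMajorant hM hbM
  obtain ⟨_, ⟨N, rfl⟩, hN⟩ := not_bddAbove_iff.mp (not_bddAbove_scaledRunningMax hunb) 0
  filter_upwards [eventually_ge_atTop N] with n hn
  have ht0 : 0 ≤ concaveMajorant (scaledRunningMax b p) := fun k =>
    (scaledRunningMax_nonneg k).trans (le_concaveMajorant ⟨_, _, hc⟩ k)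
  exact hN.trans_le <| (scaledRunningMax_monotone hn).trans <|
    (le_concaveMajorant ⟨_, _, hc⟩ n).trans (le_partialSums_iterate ht0 p n)

theorem frequently_le_div_partialSums_concaveMajorant {r : ℝ} (hr : 0 < r)
    (hrp : r < 1 / ((p + 1 : ℕ) : ℝ)) :
    ∃ᶠ m in atTop, r ≤ b m / partialSums^[p] (concaveMajorant (scaledRunningMax b p)) m := by
  have hc := scaledRunningMax_isAffineMajorant hM hbM
  have hrp' : r * (p + 1) < 1 := by
    rwa [lt_div_iff₀ (by positivity), Nat.cast_succ] at hrp
  obtain ⟨γ, hrγ, hγ1⟩ := exists_between hrp'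
  have hκ : 1 < γ / (r * (p + 1)) := (one_lt_div (by positivity)).mpr hrγ
  have hκγ : r * (γ / (r * (p + 1)) * (p + 1)) = γ := by field_simp
  refine ((frequently_concaveMajorant_scaledRunningMax_le hM hbM hunb hκ).and_eventually
    ((eventually_mul_add_pow_le p hγ1).and
      (eventually_partialSums_concaveMajorant_scaledRunningMax_pos hM hbM hunb))).mono ?_
  rintro m ⟨⟨hm, hbm, htm⟩, hγm, hsm⟩
  have key := pow_mul_partialSums_iterate_le
    (concaveMajorant_monotone ⟨_, _, hc⟩ (not_bddAbove_scaledRunningMax hunb)) hm hbm.le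
    (by positivity) htm
  rw [le_div_iff₀ hsm]
  refine le_of_mul_le_mul_left ?_ (by positivity : (0 : ℝ) < (m : ℝ) ^ p)
  calc (m : ℝ) ^ p * (r * partialSums^[p] (concaveMajorant (scaledRunningMax b p)) m)
      = r * ((m : ℝ) ^ p * partialSums^[p] (concaveMajorant (scaledRunningMax b p)) m) := by
        ring
    _ ≤ r * (γ / (r * (p + 1)) * (p + 1) * ((m : ℝ) + p) ^ p * b m) := by gcongr
    _ = r * (γ / (r * (p + 1)) * (p + 1)) * ((m : ℝ) + p) ^ p * b m := by ring
    _ = γ * ((m : ℝ) + p) ^ p * b m := by rw [hκγ]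
    _ ≤ (m : ℝ) ^ p * b m := by gcongr

theorem exists_majorant_concave_iterate_dSeq :
    ∃ s : ℕ → ℝ, 0 ≤ s 0 ∧ (∀ n, b n ≤ s n) ∧
      (Antitone fun n => dSeq^[p] s (n + 1) - dSeq^[p] s n) ∧
      (¬∃ M : ℝ, ∀ n, dSeq^[p] s n ≤ M) ∧
      limsup (fun n : ℕ => ((b n / s n : ℝ) : EReal)) atTop ∈
        Set.Icc (((1 / ((p + 1 : ℕ) : ℝ) : ℝ) : EReal)) (1 : EReal) := by
  have hc : ∃ α β, IsAffineMajorant (scaledRunningMax b p) α β :=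
    ⟨_, _, scaledRunningMax_isAffineMajorant hM hbM⟩
  have hunb' := not_bddAbove_scaledRunningMax hunb
  have hct := le_concaveMajorant hc
  have ht0 : 0 ≤ concaveMajorant (scaledRunningMax b p) := fun n =>
    (scaledRunningMax_nonneg n).trans (hct n)
  have hbs : ∀ n, b n ≤ partialSums^[p] (concaveMajorant (scaledRunningMax b p)) n :=
    le_partialSums_iterate_of_concave ht0 (concaveMajorant_antitone_sub hc)
      ((le_max_left _ _).trans (scaledRunningMax_zero.symm.trans_le (hct 0)))
      fun n hn => (le_scaledRunningMax hn).trans (hct n)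
  refine ⟨partialSums^[p] (concaveMajorant (scaledRunningMax b p)),
    (partialSums_iterate_zero p _).symm ▸ ht0 0, hbs, ?_, ?_,
    EReal.le_limsup_coe_of_frequently (by positivity) fun r hr hrp =>
      frequently_le_div_partialSums_concaveMajorant hM hbM hunb hr hrp,
    EReal.limsup_coe_div_le_one hbs
      (eventually_partialSums_concaveMajorant_scaledRunningMax_pos hM hbM hunb)⟩
  · rw [dSeq_iterate_partialSums_iterate]
    exact concaveMajorant_antitone_sub hc
  · rw [dSeq_iterate_partialSums_iterate]
    rintro ⟨C, hC⟩
    exact hunb' ⟨C, by rintro _ ⟨n, rfl⟩; exact (hct n).trans (hC n)⟩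

end growth

theorem Hindex_toNat_spec {a : ℕ → ℝ} (hH : Hindex a ≠ ⊤) :
    (∃ M : ℝ, ∀ n : ℕ, 1 ≤ n → a n / (n : ℝ) ^ (Hindex a).toNat ≤ M) ∧
      ∀ k < (Hindex a).toNat,
        ¬∃ M : ℝ, ∀ n : ℕ, 1 ≤ n → a n / (n : ℝ) ^ k ≤ M := by
  have hne : {m : ℕ∞ | ∃ k : ℕ, m = k ∧
      ∃ M : ℝ, ∀ n : ℕ, 1 ≤ n → a n / (n : ℝ) ^ k ≤ M}.Nonempty :=
    Set.nonempty_iff_ne_empty.mpr fun h => hH (by unfold Hindex; rw [h, sInf_empty])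
  obtain ⟨k, hk, hP⟩ := csInf_mem hne
  rw [← Hindex] at hk
  rw [hk, ENat.toNat_natCast]
  refine ⟨hP, fun j hj hPj => ?_⟩
  have hle : Hindex a ≤ j := sInf_le ⟨j, rfl, hPj⟩
  rw [hk, Nat.cast_le] at hle
  omega

theorem exists_Hindex_eq_succ {b : ℕ → ℝ} (hub : ¬∃ M : ℝ, ∀ n, b n ≤ M)
    (hH : Hindex b ≠ ⊤) :
    ∃ p : ℕ, Hindex b = ((p + 1 : ℕ) : ℕ∞) ∧ ∃ M : ℝ, 0 ≤ M ∧
      (∀ n, 1 ≤ n → b n ≤ M * (n : ℝ) ^ (p + 1)) ∧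
      ∀ C, ∃ n, 1 ≤ n ∧ C < b n / (n : ℝ) ^ p := by
  obtain ⟨⟨M, hM⟩, hmin⟩ := Hindex_toNat_spec hH
  obtain ⟨p, hp⟩ : ∃ p, (Hindex b).toNat = p + 1 := by
    refine Nat.exists_eq_add_one.mpr (Nat.pos_of_ne_zero fun h0 => hub ⟨max M (b 0), ?_⟩)
    rintro (_ | n)
    · exact le_max_right _ _
    · simpa [h0] using (hM (n + 1) (by omega)).trans (le_max_left M (b 0))
  refine ⟨p, by rw [← hp, ENat.natCast_toNat hH], max M 0, le_max_right _ _, fun n hn => ?_,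
    fun C => ?_⟩
  · have h := hM n hn
    rw [hp, div_le_iff₀ (pow_pos (Nat.cast_pos.mpr hn) _)] at h
    exact h.trans (mul_le_mul_of_nonneg_right (le_max_left M 0) (by positivity))
  · have h := hmin p (by omega)
    push Not at h
    exact h C

/-- Theorem 5.3: if `b` is not bounded from above and `H(b) < +∞`, then `H(b) ≥ 1`, and,
with `p = H(b) − 1`, `b` has a majorant `s` such that `s(0) ≥ 0`, `Δ^p s` is concave and
not bounded from above, and `limsup_{n→∞} b(n)/s(n) ∈ [1/H(b), 1]`. -/
theorem stmt13 (b : ℕ → ℝ)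
    (hub : ¬∃ M : ℝ, ∀ n, b n ≤ M)
    (hH : Hindex b ≠ ⊤) :
    1 ≤ Hindex b ∧
    ∃ s : ℕ → ℝ, 0 ≤ s 0 ∧ (∀ n, b n ≤ s n) ∧
      (Antitone fun n =>
        dSeq^[(Hindex b).toNat - 1] s (n + 1) - dSeq^[(Hindex b).toNat - 1] s n) ∧
      (¬∃ M : ℝ, ∀ n, dSeq^[(Hindex b).toNat - 1] s n ≤ M) ∧
      Filter.limsup (fun n : ℕ => ((b n / s n : ℝ) : EReal)) Filter.atTop ∈
        Set.Icc (((1 / ((Hindex b).toNat : ℝ) : ℝ) : EReal)) (1 : EReal) := by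
  obtain ⟨p, hHp, M, hM, hbM, hunb⟩ := exists_Hindex_eq_succ hub hH
  rw [hHp, ENat.toNat_natCast, Nat.add_sub_cancel]
  exact ⟨by exact_mod_cast Nat.le_add_left 1 p,
    exists_majorant_concave_iterate_dSeq hM hbM hunb⟩
end

section
/- Let a : ℕ → ℝ be a real sequence and let q ∈ ℕ with q ≥ 1 be such that Δ^q a ∈ ℓ¹ (i.e., ∑_{n=0}^{∞} |(Δ^q a)(n)| converges). Then H(a) ≤ q − 1, i.e., the sequence (a(n)/n^{q−1})_{n≥1} is bounded from above. -/
lemma dSeq_sum (a : ℕ → ℝ) (n : ℕ) :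
    ∑ k ∈ Finset.range (n + 1), dSeq a k = a n := by
  induction n with
  | zero => simp [dSeq]
  | succ n ih => rw [Finset.sum_range_succ, ih]; simp [dSeq]

lemma bd (m : ℕ) : ∀ (b : ℕ → ℝ) (C : ℝ), 0 ≤ C → (∀ n, |dSeq^[m] b n| ≤ C) →
    ∀ n, |b n| ≤ C * ((n : ℝ) + 1) ^ m := by
  induction m with
  | zero => intro b C hC h n; simpa using h n
  | succ m ih =>
    intro b C hC h n
    have hd : ∀ n, |dSeq b n| ≤ C * ((n : ℝ) + 1) ^ m :=
      ih (dSeq b) C hC (fun n => by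
        simpa [Function.iterate_succ_apply] using h n)
    calc |b n| = |∑ k ∈ Finset.range (n + 1), dSeq b k| := by rw [dSeq_sum]
      _ ≤ ∑ k ∈ Finset.range (n + 1), |dSeq b k| := Finset.abs_sum_le_sum_abs _ _
      _ ≤ ∑ _k ∈ Finset.range (n + 1), C * ((n : ℝ) + 1) ^ m := by
          refine Finset.sum_le_sum fun k hk => (hd k).trans ?_
          have hkn : (k : ℝ) + 1 ≤ (n : ℝ) + 1 := by
            have : k ≤ n := Nat.lt_succ_iff.mp (Finset.mem_range.mp hk)
            exact_mod_cast Nat.succ_le_succ this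
          exact mul_le_mul_of_nonneg_left
            (pow_le_pow_left₀ (by positivity) hkn m) hC
      _ = ((n : ℝ) + 1) * (C * ((n : ℝ) + 1) ^ m) := by
          rw [Finset.sum_const, Finset.card_range]; push_cast; ring
      _ = C * ((n : ℝ) + 1) ^ (m + 1) := by ring

/-- Proposition 5.4: if `q ≥ 1` and `Δ^q a ∈ ℓ¹` (i.e. `∑ |(Δ^q a)(n)|` converges), then
`H(a) ≤ q − 1`, i.e. the sequence `(a(n)/n^{q−1})_{n≥1}` is bounded from above. -/
theorem stmt14 (a : ℕ → ℝ) (q : ℕ) (hq : 1 ≤ q)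
    (hsum : Summable fun n => |dSeq^[q] a n|) :
    Hindex a ≤ ((q - 1 : ℕ) : ℕ∞) ∧
      ∃ M : ℝ, ∀ n : ℕ, 1 ≤ n → a n / (n : ℝ) ^ (q - 1) ≤ M := by
  set C : ℝ := ∑' n, |dSeq^[q] a n| with hC
  have hC0 : 0 ≤ C := tsum_nonneg fun n => abs_nonneg _
  have hqe : q - 1 + 1 = q := Nat.succ_pred_eq_of_pos hq
  -- the (q-1)-th difference is bounded by C
  have hb : ∀ n, |dSeq^[q - 1] a n| ≤ C := by
    intro n
    have h1 : dSeq^[q - 1] a n = ∑ k ∈ Finset.range (n + 1), dSeq (dSeq^[q - 1] a) k :=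
      (dSeq_sum _ n).symm
    have h2 : ∀ k, dSeq (dSeq^[q - 1] a) k = dSeq^[q] a k := by
      intro k
      have := Function.iterate_succ_apply' dSeq (q - 1) a
      rw [Nat.succ_eq_add_one, hqe] at this
      rw [← this]
    calc |dSeq^[q - 1] a n| = |∑ k ∈ Finset.range (n + 1), dSeq^[q] a k| := by
          rw [h1]; simp_rw [h2]
      _ ≤ ∑ k ∈ Finset.range (n + 1), |dSeq^[q] a k| := Finset.abs_sum_le_sum_abs _ _
      _ ≤ C := Summable.sum_le_tsum _ (fun k _ => abs_nonneg _) hsum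
  have ha : ∀ n, |a n| ≤ C * ((n : ℝ) + 1) ^ (q - 1) := bd (q - 1) a C hC0 hb
  have key : ∀ n : ℕ, 1 ≤ n → a n / (n : ℝ) ^ (q - 1) ≤ C * 2 ^ (q - 1) := by
    intro n hn
    have hn' : (1 : ℝ) ≤ (n : ℝ) := by exact_mod_cast hn
    have hnp : (0 : ℝ) < (n : ℝ) ^ (q - 1) := by positivity
    rw [div_le_iff₀ hnp]
    calc a n ≤ |a n| := le_abs_self _
      _ ≤ C * ((n : ℝ) + 1) ^ (q - 1) := ha n
      _ ≤ C * (2 * (n : ℝ)) ^ (q - 1) := by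
          refine mul_le_mul_of_nonneg_left (pow_le_pow_left₀ (by positivity) ?_ _) hC0
          linarith
      _ = C * 2 ^ (q - 1) * (n : ℝ) ^ (q - 1) := by rw [mul_pow]; ring
  refine ⟨?_, ⟨C * 2 ^ (q - 1), key⟩⟩
  exact sInf_le ⟨q - 1, rfl, C * 2 ^ (q - 1), key⟩
end

section
/- Let X be a complex nonzero Banach space, let T be a bounded linear operator on X, and let b : ℕ → ℝ be a sequence of strictly positive real numbers such that H(b) < +∞, b(n) → +∞, and ‖T^n‖/b(n) → 0 as n → +∞. Let s : ℕ → ℝ be any nondecreasing sequence of strictly positive real numbers such that s(n) → +∞, s(n+1)/s(n) → 1, Δ^q s ∈ ℓ¹ for some q ∈ ℕ with q ≥ 2, and the sequence (b(n)/s(n))_{n∈ℕ} is bounded. Then ‖T^n‖/s(n) → 0 as n → +∞, and the following are equivalent: (i) the sequence of operators (1/s(n))·∑_{k=0}^{n} (Δs)(n−k)·T^k converges in the operator norm topology; (ii) the range of I − T is closed in X and X is the direct sum of the kernel of I − T and the range of I − T. Moreover, if these equivalent conditions hold and P is the operator-norm limit of the sequence in (i), then P is the projection of X onto the kernel of I −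 T along the range of I − T (i.e., P² = P, the range of P is the kernel of I − T, and the kernel of P is the range of I − T). -/
/-!
Since the coefficients `Δs(n - k)` sum to `s(n)`, the Nörlund mean `Aₙ` equals `1 - (1 - T) Rₙ`
with `Rₙ` a polynomial in `T`. Multiplying a Nörlund sum by `1 - T` differences its coefficients up
to one boundary term, so `Aₙ (1 - T)^(q-1)` is a sum of `q - 1` boundary terms, each `o(1)` because
`s(n+1)/s(n) → 1`, and of `s(n)⁻¹ ∑ₖ Δ^q s(n + q - 1 - k) Tᵏ`, which is `o(1)` because
`Δ^q s ∈ ℓ¹` and `‖Tᵏ‖ = o(s(k))`.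

If `Aₙ → P`, the recursion `T Aₙ = (s(n+1)/s(n)) Aₙ₊₁ - (Δs(n+1)/s(n)) 1` gives `TP = P`, and then
`P` fixes `ker(1 - T)` and kills `ran(1 - T)`. For `n` large `u = 1 - (Aₙ - P)` is invertible and
`1 - P = (1 - Aₙ) u⁻¹ = (1 - T) Rₙ u⁻¹`, so `ker P ⊆ ran(1 - T)`.
Conversely, if `X = ker(1 - T) ⊕ ran(1 - T)` with closed range, `1 - T` is invertible on its range,
so `1 - P = (1 - T)^(q-1) G` for the projection `P` and a bounded `G`, and
`Aₙ - P = Aₙ (1 - T)^(q-1) G → 0`.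
-/

open Filter Finset Topology

theorem sum_range_succ_dSeq (c : ℕ → ℝ) (n : ℕ) : ∑ k ∈ range (n + 1), dSeq c k = c n := by
  induction n with
  | zero => simp [dSeq]
  | succ n ih => rw [sum_range_succ, ih]; simp [dSeq]

theorem Filter.Tendsto.div_of_bounded_div {ι : Type*} {l : Filter ι} {f b s : ι → ℝ}
    (hb : ∀ i, b i ≠ 0) (hf : Tendsto (fun i => f i / b i) l (𝓝 0))
    (hbs : ∃ M, ∀ i, |b i / s i| ≤ M) : Tendsto (fun i => f i / s i) l (𝓝 0) := by
  obtain ⟨M, hM⟩ := hbs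
  have h := hf.zero_mul_isBoundedUnder_le (g := fun i => b i / s i) (isBoundedUnder_of ⟨M, hM⟩)
  refine h.congr fun i => ?_
  rw [div_mul_div_comm, mul_comm (b i), mul_div_mul_right _ _ (hb i)]

section Ratio

variable {s : ℕ → ℝ} (hs0 : ∀ n, 0 < s n)
  (hsrat : Tendsto (fun n => s (n + 1) / s n) atTop (𝓝 1))
include hs0 hsrat

theorem tendsto_add_div_self (k : ℕ) : Tendsto (fun n => s (n + k) / s n) atTop (𝓝 1) := by
  induction k with
  | zero => exact tendsto_const_nhds.congr fun n => (div_self (hs0 n).ne').symm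
  | succ k ih =>
    have h := (hsrat.comp (tendsto_add_atTop_nat k)).mul ih
    rw [one_mul] at h
    refine h.congr fun n => ?_
    simp only [Function.comp, ← add_assoc]
    rw [div_mul_div_cancel₀ (hs0 _).ne']

theorem tendsto_add_div_of_tendsto_div {u : ℕ → ℝ}
    (hu : Tendsto (fun n => u n / s n) atTop (𝓝 0)) (k : ℕ) :
    Tendsto (fun n => u (n + k) / s n) atTop (𝓝 0) := by
  have h := (hu.comp (tendsto_add_atTop_nat k)).mul (tendsto_add_div_self hs0 hsrat k)
  rw [zero_mul] at h
  exact h.congr fun n => div_mul_div_cancel₀ (hs0 _).ne'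

theorem tendsto_dSeq_div_of_tendsto_div {u : ℕ → ℝ}
    (hu : Tendsto (fun n => u n / s n) atTop (𝓝 0)) :
    Tendsto (fun n => dSeq u n / s n) atTop (𝓝 0) := by
  rw [← tendsto_add_atTop_iff_nat 1]
  have hinv : Tendsto (fun n => s n / s (n + 1)) atTop (𝓝 1) := by
    simpa using hsrat.inv₀ one_ne_zero
  have h := (hu.comp (tendsto_add_atTop_nat 1)).sub (hu.mul hinv)
  rw [zero_mul, sub_zero] at h
  refine h.congr fun n => ?_
  simp only [Function.comp, dSeq]
  rw [div_mul_div_cancel₀ (hs0 n).ne', sub_div]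

theorem tendsto_dSeq_self_div : Tendsto (fun n => dSeq s n / s n) atTop (𝓝 0) := by
  rw [← tendsto_add_atTop_iff_nat 1]
  have h := tendsto_const_nhds (x := (1 : ℝ)).sub (hsrat.inv₀ one_ne_zero)
  rw [inv_one, sub_self] at h
  refine h.congr fun n => ?_
  simp only [dSeq]
  rw [inv_div, sub_div, div_self (hs0 _).ne']

theorem tendsto_iterate_dSeq_div (i : ℕ) :
    Tendsto (fun n => dSeq^[i + 1] s n / s n) atTop (𝓝 0) := by
  induction i with
  | zero => exact tendsto_dSeq_self_div hs0 hsrat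
  | succ i ih =>
    simp only [Function.iterate_succ_apply' _ (i + 1)]
    exact tendsto_dSeq_div_of_tendsto_div hs0 hsrat ih

end Ratio

theorem exists_le_mul_add_of_tendsto_div {f s : ℕ → ℝ} (hs : Monotone s) (hs0 : ∀ n, 0 < s n)
    (hf0 : ∀ n, 0 ≤ f n) (hf : Tendsto (fun n => f n / s n) atTop (𝓝 0)) {ε : ℝ} (hε : 0 < ε) :
    ∃ C, 0 ≤ C ∧ ∀ n, ∀ k ≤ n, f k ≤ ε * s n + C := by
  obtain ⟨N, hN⟩ := eventually_atTop.mp (hf.eventually_le_const hε)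
  have hC0 : 0 ≤ ∑ k ∈ range N, f k := sum_nonneg fun k _ => hf0 k
  refine ⟨∑ k ∈ range N, f k, hC0, fun n k hkn => ?_⟩
  have hsk : ε * s k ≤ ε * s n := mul_le_mul_of_nonneg_left (hs hkn) hε.le
  rcases lt_or_ge k N with hk | hk
  · have := single_le_sum (fun j _ => hf0 j) (mem_range.mpr hk)
    nlinarith [hs0 n]
  · have := (div_le_iff₀ (hs0 k)).mp (hN k hk)
    linarith

theorem tendsto_sum_abs_mul_div {d f s : ℕ → ℝ} (hd : Summable fun n => |d n|) (hs : Monotone s)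
    (hs0 : ∀ n, 0 < s n) (hstop : Tendsto s atTop atTop) (hf0 : ∀ n, 0 ≤ f n)
    (hf : Tendsto (fun n => f n / s n) atTop (𝓝 0)) :
    Tendsto (fun n => (∑ k ∈ range (n + 1), |d (n - k)| * f k) / s n) atTop (𝓝 0) := by
  set E := ∑' n, |d n|
  have hE0 : 0 ≤ E := tsum_nonneg fun n => abs_nonneg _
  have hE : ∀ n, ∑ k ∈ range (n + 1), |d (n - k)| ≤ E := fun n => by
    have h := sum_range_reflect (fun k => |d k|) (n + 1)
    rw [Nat.add_sub_cancel] at h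
    rw [h]
    exact hd.sum_le_tsum _ fun _ _ => abs_nonneg _
  rw [Metric.tendsto_atTop]
  intro δ hδ
  set ε := δ / (2 * (E + 1))
  have hεE : E * ε < δ / 2 := by
    rw [mul_div_assoc', div_lt_div_iff₀ (by positivity) two_pos]
    nlinarith
  obtain ⟨C, hC0, hC⟩ := exists_le_mul_add_of_tendsto_div hs hs0 hf0 hf (by positivity : 0 < ε)
  have hbound : ∀ n, (∑ k ∈ range (n + 1), |d (n - k)| * f k) / s n ≤ E * ε + E * C / s n := by
    intro n
    rw [div_le_iff₀ (hs0 n), add_mul, div_mul_cancel₀ _ (hs0 n).ne']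
    calc ∑ k ∈ range (n + 1), |d (n - k)| * f k
        ≤ ∑ k ∈ range (n + 1), |d (n - k)| * (ε * s n + C) :=
          sum_le_sum fun k hk => mul_le_mul_of_nonneg_left
            (hC n k (Nat.lt_succ_iff.mp (mem_range.mp hk))) (abs_nonneg _)
      _ ≤ E * (ε * s n + C) := by
          rw [← sum_mul]
          exact mul_le_mul_of_nonneg_right (hE n) (by positivity [hs0 n])
      _ = E * ε * s n + E * C := by ring
  obtain ⟨N, hN⟩ := eventually_atTop.mp
    ((tendsto_const_nhds.div_atTop hstop).eventually_lt_const (half_pos hδ) :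
      ∀ᶠ n in atTop, E * C / s n < δ / 2)
  refine ⟨N, fun n hn => ?_⟩
  have hnonneg : 0 ≤ ∑ k ∈ range (n + 1), |d (n - k)| * f k :=
    sum_nonneg fun k _ => mul_nonneg (abs_nonneg _) (hf0 k)
  rw [Real.dist_eq, sub_zero, abs_of_nonneg (div_nonneg hnonneg (hs0 n).le)]
  linarith [hbound n, hN n hn]

section Algebra

variable {𝔸 : Type*} [Ring 𝔸] [Algebra ℝ 𝔸]

def norlundSum (c : ℕ → ℝ) (a : 𝔸) (n : ℕ) : 𝔸 :=
  ∑ k ∈ range (n + 1), c (n - k) • a ^ k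

theorem norlundSum_eq_sum_antidiagonal (c : ℕ → ℝ) (a : 𝔸) (n : ℕ) :
    norlundSum c a n = ∑ p ∈ antidiagonal n, c p.1 • a ^ p.2 := by
  rw [← Nat.sum_antidiagonal_swap]
  exact (Nat.sum_antidiagonal_eq_sum_range_succ (fun k i => c i • a ^ k) n).symm

theorem norlundSum_succ (c : ℕ → ℝ) (a : 𝔸) (n : ℕ) :
    norlundSum c a (n + 1) = c (n + 1) • 1 + norlundSum c a n * a := by
  simp only [norlundSum_eq_sum_antidiagonal, Nat.sum_antidiagonal_succ', sum_mul, smul_mul_assoc,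
    pow_succ, pow_zero]

theorem norlundSum_dSeq_succ (c : ℕ → ℝ) (a : 𝔸) (n : ℕ) :
    norlundSum (dSeq c) a (n + 1) = norlundSum c a (n + 1) - norlundSum c a n := by
  simp only [norlundSum_eq_sum_antidiagonal, Nat.sum_antidiagonal_succ (n := n), dSeq, sub_smul,
    sum_sub_distrib]
  abel

theorem norlundSum_mul_one_sub (c : ℕ → ℝ) (a : 𝔸) (n : ℕ) :
    norlundSum c a n * (1 - a) = c (n + 1) • 1 - norlundSum (dSeq c) a (n + 1) := by
  rw [norlundSum_dSeq_succ, norlundSum_succ, mul_sub, mul_one]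
  abel

theorem commute_norlundSum (c : ℕ → ℝ) (a : 𝔸) (n : ℕ) : Commute a (norlundSum c a n) :=
  Commute.sum_right _ _ _ fun _ _ => ((Commute.refl a).pow_right _).smul_right _

theorem exists_commute_norlundSum_eq (c : ℕ → ℝ) (a : 𝔸) (n : ℕ) :
    ∃ R : 𝔸, Commute a R ∧
      norlundSum c a n = (∑ k ∈ range (n + 1), c k) • 1 - (1 - a) * R := by
  refine ⟨∑ k ∈ range (n + 1), c (n - k) • ∑ i ∈ range k, a ^ i,
    Commute.sum_right _ _ _ fun _ _ => (Commute.sum_right _ _ _ fun _ _ =>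
      (Commute.refl a).pow_right _).smul_right _, ?_⟩
  rw [mul_sum]
  simp only [mul_smul_comm, mul_neg_geom_sum, smul_sub, sum_sub_distrib, ← sum_smul]
  rw [← sum_range_reflect c, Nat.add_sub_cancel, norlundSum]
  abel

noncomputable def norlundMean (s : ℕ → ℝ) (a : 𝔸) (n : ℕ) : 𝔸 :=
  (s n)⁻¹ • norlundSum (dSeq s) a n

theorem exists_commute_norlundMean_eq {s : ℕ → ℝ} (a : 𝔸) {n : ℕ} (hs : s n ≠ 0) :
    ∃ R : 𝔸, Commute (1 - a) R ∧ norlundMean s a n = 1 - (1 - a) * R := by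
  obtain ⟨R, hR, hsum⟩ := exists_commute_norlundSum_eq (dSeq s) a n
  refine ⟨(s n)⁻¹ • R, ((Commute.one_left R).sub_left hR).smul_right _, ?_⟩
  rw [norlundMean, hsum, sum_range_succ_dSeq, smul_sub, smul_smul, inv_mul_cancel₀ hs, one_smul,
    mul_smul_comm]

theorem mul_norlundMean {s : ℕ → ℝ} (a : 𝔸) {n : ℕ} (hs : s (n + 1) ≠ 0) :
    a * norlundMean s a n =
      (s (n + 1) / s n) • norlundMean s a (n + 1) - (dSeq s (n + 1) / s n) • 1 := by
  have hscal : s (n + 1) / s n * (s (n + 1))⁻¹ = (s n)⁻¹ := by field_simp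
  rw [norlundMean, norlundMean, norlundSum_succ, mul_smul_comm, (commute_norlundSum _ a n).eq,
    smul_smul, hscal, div_eq_inv_mul, mul_smul, smul_add]
  abel

end Algebra

section NormedAlgebra

variable {𝔸 : Type*} [NormedRing 𝔸] [NormedAlgebra ℝ 𝔸] {s : ℕ → ℝ}

theorem norm_norlundSum_le (c : ℕ → ℝ) (a : 𝔸) (n : ℕ) :
    ‖norlundSum c a n‖ ≤ ∑ k ∈ range (n + 1), |c (n - k)| * ‖a ^ k‖ :=
  (norm_sum_le _ _).trans <| sum_le_sum fun k _ => by rw [norm_smul, Real.norm_eq_abs]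

theorem norm_norlundSum_mul_one_sub_pow_le (c : ℕ → ℝ) (a : 𝔸) (r n : ℕ) :
    ‖norlundSum c a n * (1 - a) ^ r‖ ≤
      ∑ i ∈ range r, |dSeq^[i] c (n + 1 + i)| * ‖(1 - a) ^ (r - 1 - i)‖ +
        ‖norlundSum (dSeq^[r] c) a (n + r)‖ := by
  induction r generalizing c n with
  | zero => simp
  | succ r ih =>
    calc ‖norlundSum c a n * (1 - a) ^ (r + 1)‖
        = ‖c (n + 1) • (1 - a) ^ r - norlundSum (dSeq c) a (n + 1) * (1 - a) ^ r‖ := by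
          rw [pow_succ', ← mul_assoc, norlundSum_mul_one_sub, sub_mul, smul_mul_assoc, one_mul]
      _ ≤ |c (n + 1)| * ‖(1 - a) ^ r‖ + ‖norlundSum (dSeq c) a (n + 1) * (1 - a) ^ r‖ := by
          rw [← Real.norm_eq_abs, ← norm_smul]
          exact norm_sub_le _ _
      _ ≤ |c (n + 1)| * ‖(1 - a) ^ r‖ +
            (∑ i ∈ range r, |dSeq^[i] (dSeq c) (n + 1 + 1 + i)| * ‖(1 - a) ^ (r - 1 - i)‖ +
              ‖norlundSum (dSeq^[r] (dSeq c)) a (n + 1 + r)‖) := by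
          gcongr
          exact ih _ _
      _ = _ := by
          rw [sum_range_succ', Function.iterate_succ_apply, add_right_comm n 1 r]
          simp only [Function.iterate_succ_apply, add_assoc, Nat.sub_zero, Function.iterate_zero,
            id, Nat.add_sub_cancel, Nat.sub_sub, add_comm 1]
          ring

theorem norm_norlundMean_mul_one_sub_pow_le (hs0 : ∀ n, 0 < s n) (a : 𝔸) (r n : ℕ) :
    ‖norlundMean s a n * (1 - a) ^ r‖ ≤
      ∑ i ∈ range r, |dSeq^[i + 1] s (n + 1 + i)| / s n * ‖(1 - a) ^ (r - 1 - i)‖ +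
        (∑ k ∈ range (n + r + 1), |dSeq^[r + 1] s (n + r - k)| * ‖a ^ k‖) / s n := by
  have hbound := (norm_norlundSum_mul_one_sub_pow_le (dSeq s) a r n).trans
    (add_le_add_right (norm_norlundSum_le (dSeq^[r] (dSeq s)) a (n + r)) _)
  rw [norlundMean, smul_mul_assoc, norm_smul, Real.norm_eq_abs, abs_inv, abs_of_pos (hs0 n)]
  refine (mul_le_mul_of_nonneg_left hbound (inv_nonneg.mpr (hs0 n).le)).trans_eq ?_
  simp only [Function.iterate_succ_apply]
  rw [mul_add, mul_sum, inv_mul_eq_div]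
  congr 1
  exact sum_congr rfl fun i _ => by ring

variable (hs0 : ∀ n, 0 < s n) (hsrat : Tendsto (fun n => s (n + 1) / s n) atTop (𝓝 1))
include hs0 hsrat

theorem tendsto_norm_norlundMean_mul_one_sub_pow (hs : Monotone s)
    (hstop : Tendsto s atTop atTop) {a : 𝔸} (ha : Tendsto (fun n => ‖a ^ n‖ / s n) atTop (𝓝 0))
    {r : ℕ} (hsr : Summable fun n => |dSeq^[r + 1] s n|) :
    Tendsto (fun n => ‖norlundMean s a n * (1 - a) ^ r‖) atTop (𝓝 0) := by
  have hboundary : ∀ i ∈ range r, Tendsto (fun n =>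
      |dSeq^[i + 1] s (n + 1 + i)| / s n * ‖(1 - a) ^ (r - 1 - i)‖) atTop (𝓝 0) := fun i _ => by
    have h := (tendsto_add_div_of_tendsto_div hs0 hsrat
      (tendsto_iterate_dSeq_div hs0 hsrat i) (1 + i)).abs.mul_const ‖(1 - a) ^ (r - 1 - i)‖
    rw [abs_zero, zero_mul] at h
    refine h.congr fun n => ?_
    rw [abs_div, abs_of_pos (hs0 n), add_assoc]
  have hbulk := tendsto_add_div_of_tendsto_div hs0 hsrat
    (tendsto_sum_abs_mul_div hsr hs hs0 hstop (fun k => norm_nonneg (a ^ k)) ha) r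
  refine squeeze_zero (fun n => norm_nonneg _)
    (norm_norlundMean_mul_one_sub_pow_le hs0 a r) ?_
  simpa using (tendsto_finsetSum _ hboundary).add hbulk

theorem mul_eq_of_tendsto_norlundMean {a P : 𝔸} (hP : Tendsto (norlundMean s a) atTop (𝓝 P)) :
    a * P = P := by
  have hdiv : Tendsto (fun n => dSeq s (n + 1) / s n) atTop (𝓝 0) := by
    have h := hsrat.sub_const 1
    rw [sub_self] at h
    exact h.congr fun n => by rw [dSeq, sub_div, div_self (hs0 n).ne']
  have h := (hsrat.smul (hP.comp (tendsto_add_atTop_nat 1))).sub (hdiv.smul_const 1)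
  rw [one_smul, zero_smul, sub_zero] at h
  exact tendsto_nhds_unique (hP.const_mul a)
    (h.congr fun n => (mul_norlundMean a (hs0 (n + 1)).ne').symm)

end NormedAlgebra

section MeanErgodic

variable {𝕜 X : Type*} [NontriviallyNormedField 𝕜] [NormedAddCommGroup X] [NormedSpace 𝕜 X]

theorem one_sub_mul_apply_of_apply_eq_zero {S B : X →L[𝕜] X} (hB : Commute S B) {x : X}
    (hx : S x = 0) : (1 - S * B) x = x := by
  rw [hB.eq, sub_apply, mul_apply_eq_comp, hx, map_zero, sub_zero, one_apply_eq_self]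

theorem exists_mul_eq_zero_and_pow_mul_eq_one_sub [CompleteSpace X] {S : X →L[𝕜] X}
    (hcl : IsClosed (LinearMap.range (S : X →ₗ[𝕜] X) : Set X))
    (hcompl : IsCompl (LinearMap.ker (S : X →ₗ[𝕜] X)) (LinearMap.range (S : X →ₗ[𝕜] X))) (r : ℕ) :
    ∃ P G : X →L[𝕜] X, S * P = 0 ∧ S ^ r * G = 1 - P := by
  set Y := LinearMap.range (S : X →ₗ[𝕜] X)
  -- `S` maps `Y` bijectively onto the Banach space `Y`; with `g` the inverse, `P = 1 - g S` is
  -- the projection onto `ker S` along `Y`, and `G = g ^ (r + 1) S`.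
  have : CompleteSpace Y := hcl.completeSpace_coe
  let π : X →L[𝕜] Y := S.codRestrict Y fun x => LinearMap.mem_range_self _ x
  let SY : Y →L[𝕜] Y := π.comp Y.subtypeL
  have hinj : LinearMap.ker (SY : Y →ₗ[𝕜] Y) = ⊥ := by
    refine (Submodule.eq_bot_iff _).mpr fun y hy => Subtype.ext ?_
    have hSy : S y = 0 := congrArg Subtype.val (LinearMap.mem_ker.mp hy)
    exact Submodule.disjoint_def.mp hcompl.disjoint _ (LinearMap.mem_ker.mpr hSy) y.2
  have hsurj : LinearMap.range (SY : Y →ₗ[𝕜] Y) = ⊤ := by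
    refine eq_top_iff.mpr fun z _ => ?_
    obtain ⟨x, hx⟩ := z.2
    obtain ⟨k, hk, y, hy, rfl⟩ :=
      Submodule.mem_sup.mp (hcompl.codisjoint.eq_top ▸ Submodule.mem_top (x := x))
    refine ⟨⟨y, hy⟩, Subtype.ext ?_⟩
    change S y = z
    rw [← hx, map_add, LinearMap.mem_ker.mp hk, zero_add]
    rfl
  let g : Y →L[𝕜] Y := (ContinuousLinearEquiv.ofBijective SY hinj hsurj).symm
  have hSg : ∀ y : Y, S (g y) = y := fun y =>
    congrArg Subtype.val ((ContinuousLinearEquiv.ofBijective SY hinj hsurj).apply_symm_apply y)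
  have hSg_pow : ∀ (r : ℕ) (y : Y), (S ^ r) ((g ^ r) y) = y := fun r => by
    induction r with
    | zero => intro y; rfl
    | succ r ih =>
      intro y
      rw [pow_succ S, pow_succ' g, mul_apply_eq_comp, mul_apply_eq_comp, hSg, ih]
  refine ⟨1 - Y.subtypeL.comp (g.comp π), Y.subtypeL.comp ((g ^ r).comp (g.comp π)), ?_, ?_⟩
  · ext x
    simp [hSg, π]
  · ext x
    simpa using hSg_pow r (g (π x))

variable {S P : X →L[𝕜] X} {A R : ℕ → X →L[𝕜] X}

theorem tendsto_of_isCompl_ker_range [CompleteSpace X] (hA : ∀ n, A n = 1 - S * R n)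
    (hR : ∀ n, Commute S (R n))
    (hcl : IsClosed (LinearMap.range (S : X →ₗ[𝕜] X) : Set X))
    (hcompl : IsCompl (LinearMap.ker (S : X →ₗ[𝕜] X)) (LinearMap.range (S : X →ₗ[𝕜] X))) {r : ℕ}
    (hAS : Tendsto (fun n => A n * S ^ r) atTop (𝓝 0)) : ∃ P, Tendsto A atTop (𝓝 P) := by
  obtain ⟨P, G, hSP, hG⟩ := exists_mul_eq_zero_and_pow_mul_eq_one_sub hcl hcompl r
  have hAP : ∀ n, A n - P = A n * S ^ r * G := fun n => by
    have hAPP : A n * P = P := by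
      ext x
      rw [hA n]
      exact one_sub_mul_apply_of_apply_eq_zero (hR n) (DFunLike.congr_fun hSP x)
    rw [mul_assoc, hG, mul_sub, mul_one, hAPP]
  refine ⟨P, tendsto_sub_nhds_zero_iff.mp ?_⟩
  simpa [hAP] using hAS.mul_const G

theorem mul_self_eq_and_range_eq_and_ker_eq_of_tendsto [CompleteSpace X]
    (hA : ∀ n, A n = 1 - S * R n) (hR : ∀ n, Commute S (R n))
    (hP : Tendsto A atTop (𝓝 P)) (hSP : S * P = 0) :
    P * P = P ∧ LinearMap.range (P : X →ₗ[𝕜] X) = LinearMap.ker (S : X →ₗ[𝕜] X) ∧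
      LinearMap.ker (P : X →ₗ[𝕜] X) = LinearMap.range (S : X →ₗ[𝕜] X) := by
  have hAS : ∀ n, A n * S = S * A n := fun n => by
    rw [hA, sub_mul, mul_sub, one_mul, mul_one, mul_assoc, (hR n).eq]
  have hPS : P * S = 0 := tendsto_nhds_unique (hP.mul_const S) (by
    simpa [hAS, hSP] using hP.const_mul S)
  have hfix : ∀ x ∈ LinearMap.ker (S : X →ₗ[𝕜] X), P x = x := fun x hx => by
    have hAx : ∀ n, A n x = x := fun n => by
      rw [hA n]
      exact one_sub_mul_apply_of_apply_eq_zero (hR n) hx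
    exact tendsto_nhds_unique (hP.eval_const x) (by simp [hAx])
  have hrange : LinearMap.range (P : X →ₗ[𝕜] X) = LinearMap.ker (S : X →ₗ[𝕜] X) := by
    refine le_antisymm ?_ fun x hx => ⟨x, hfix x hx⟩
    rintro _ ⟨x, rfl⟩
    exact LinearMap.mem_ker.mpr (DFunLike.congr_fun hSP x)
  have hPP : P * P = P := by
    ext x
    exact hfix _ (hrange ▸ LinearMap.mem_range_self _ x)
  refine ⟨hPP, hrange, le_antisymm (fun x hx => ?_) ?_⟩
  · obtain ⟨n, hn⟩ : ∃ n, ‖A n - P‖ < 1 :=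
      ((tendsto_iff_norm_sub_tendsto_zero.mp hP).eventually_lt_const one_pos).exists
    let u := Units.oneSub (A n - P) hn
    have hPA : P * A n = P := by rw [hA n, mul_sub, mul_one, ← mul_assoc, hPS, zero_mul, sub_zero]
    have hPu : P * ↑u⁻¹ = P := by
      have h : P * ↑u = P := by
        rw [Units.val_oneSub, mul_sub, mul_one, mul_sub, hPA, hPP, sub_self, sub_zero]
      rw [← h, mul_assoc, Units.mul_inv, mul_one, h]
    have hkey : 1 - P = S * (R n * ↑u⁻¹) := by
      have hSR : S * R n = ↑u - P := by rw [Units.val_oneSub, hA n]; abel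
      rw [← mul_assoc, hSR, sub_mul, Units.mul_inv, hPu]
    refine ⟨(R n * ↑u⁻¹) x, ?_⟩
    have h := DFunLike.congr_fun hkey x
    have hPx : P x = 0 := hx
    rw [sub_apply, one_apply_eq_self, hPx, sub_zero] at h
    exact h.symm
  · rintro _ ⟨x, rfl⟩
    exact LinearMap.mem_ker.mpr (DFunLike.congr_fun hPS x)

theorem exists_tendsto_iff_isCompl_ker_range [CompleteSpace X] (hA : ∀ n, A n = 1 - S * R n)
    (hR : ∀ n, Commute S (R n)) (hSP : ∀ P, Tendsto A atTop (𝓝 P) → S * P = 0) {r : ℕ}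
    (hAS : Tendsto (fun n => A n * S ^ r) atTop (𝓝 0)) :
    (∃ P, Tendsto A atTop (𝓝 P)) ↔
      IsClosed (LinearMap.range (S : X →ₗ[𝕜] X) : Set X) ∧
        IsCompl (LinearMap.ker (S : X →ₗ[𝕜] X)) (LinearMap.range (S : X →ₗ[𝕜] X)) := by
  refine ⟨fun ⟨P, hP⟩ => ?_,
    fun ⟨hcl, hcompl⟩ => tendsto_of_isCompl_ker_range hA hR hcl hcompl hAS⟩
  obtain ⟨hPP, hrange, hker⟩ := mul_self_eq_and_range_eq_and_ker_eq_of_tendsto hA hR hP (hSP P hP)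
  rw [← hrange, ← hker]
  exact ⟨P.isClosed_ker, LinearMap.IsIdempotentElem.isCompl
    (ContinuousLinearMap.IsIdempotentElem.toLinearMap hPP)⟩

end MeanErgodic

theorem stmt18_general {X : Type*} [NormedAddCommGroup X] [NormedSpace ℂ X] [CompleteSpace X]
    (T : X →L[ℂ] X) (b s : ℕ → ℝ) (q : ℕ)
    (hb0 : ∀ n, 0 < b n)
    (hTb : Filter.Tendsto (fun n => ‖T ^ n‖ / b n) Filter.atTop (nhds 0))
    (hs0 : ∀ n, 0 < s n) (hsmono : Monotone s)
    (hstop : Filter.Tendsto s Filter.atTop Filter.atTop)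
    (hsrat : Filter.Tendsto (fun n => s (n + 1) / s n) Filter.atTop (nhds 1))
    (hq : 2 ≤ q) (hsq : Summable fun n => |dSeq^[q] s n|)
    (hbs : ∃ M : ℝ, ∀ n, |b n / s n| ≤ M) :
    Filter.Tendsto (fun n => ‖T ^ n‖ / s n) Filter.atTop (nhds 0) ∧
    ((∃ P : X →L[ℂ] X,
        Filter.Tendsto
          (fun n : ℕ => (((s n)⁻¹ : ℝ) : ℂ) •
            ∑ k ∈ Finset.range (n + 1), ((dSeq s (n - k) : ℝ) : ℂ) • T ^ k)
          Filter.atTop (nhds P)) ↔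
      (IsClosed (LinearMap.range ((1 - T : X →L[ℂ] X) : X →ₗ[ℂ] X) : Set X) ∧
        IsCompl (LinearMap.ker ((1 - T : X →L[ℂ] X) : X →ₗ[ℂ] X)) (LinearMap.range ((1 - T : X →L[ℂ] X) : X →ₗ[ℂ] X)))) ∧
    ∀ P : X →L[ℂ] X,
      Filter.Tendsto
          (fun n : ℕ => (((s n)⁻¹ : ℝ) : ℂ) •
            ∑ k ∈ Finset.range (n + 1), ((dSeq s (n - k) : ℝ) : ℂ) • T ^ k)
          Filter.atTop (nhds P) →
        (P * P = P ∧ LinearMap.range (P : X →ₗ[ℂ] X) = LinearMap.ker ((1 - T : X →L[ℂ] X) : X →ₗ[ℂ] X) ∧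
          LinearMap.ker (P : X →ₗ[ℂ] X) = LinearMap.range ((1 - T : X →L[ℂ] X) : X →ₗ[ℂ] X)) := by
  have hmean : (fun n : ℕ => (((s n)⁻¹ : ℝ) : ℂ) •
      ∑ k ∈ range (n + 1), ((dSeq s (n - k) : ℝ) : ℂ) • T ^ k) = norlundMean s T := by
    funext n
    simp only [Complex.coe_smul]
    rfl
  have hTs := hTb.div_of_bounded_div (fun n => (hb0 n).ne') hbs
  obtain ⟨r, rfl⟩ : ∃ r, q = r + 1 := ⟨q - 1, by omega⟩
  choose R hR hA using fun n => exists_commute_norlundMean_eq T (hs0 n).ne'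
  have hSP : ∀ P, Tendsto (norlundMean s T) atTop (𝓝 P) → (1 - T) * P = 0 := fun P hP => by
    rw [sub_mul, one_mul, mul_eq_of_tendsto_norlundMean hs0 hsrat hP, sub_self]
  have hAS := tendsto_norm_norlundMean_mul_one_sub_pow hs0 hsrat hsmono hstop hTs hsq
  rw [hmean]
  exact ⟨hTs,
    exists_tendsto_iff_isCompl_ker_range hA hR hSP (tendsto_zero_iff_norm_tendsto_zero.mpr hAS),
    fun P hP => mul_self_eq_and_range_eq_and_ker_eq_of_tendsto hA hR hP (hSP P hP)⟩

/-- Theorem 6.7: let `X` be a complex nonzero Banach space, `T ∈ L(X)`, and `b` a sequence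
of strictly positive reals with `H(b) < +∞`, `b(n) → +∞` and `‖T^n‖/b(n) → 0`.  Let `s` be
any nondecreasing sequence of strictly positive reals with `s(n) → +∞`, `s(n+1)/s(n) → 1`,
`Δ^q s ∈ ℓ¹` for some `q ≥ 2`, and `(b(n)/s(n))_n` bounded.  Then `‖T^n‖/s(n) → 0`, and
the Nörlund means `(1/s(n)) ∑_{k=0}^{n} (Δs)(n−k) T^k` converge in operator norm iff
the range of `I − T` is closed and `X = ker(I − T) ⊕ ran(I − T)`; moreover any operator
norm limit `P` of these means is the projection onto `ker(I − T)` along `ran(I − T)`. -/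
theorem stmt18 {X : Type*} [NormedAddCommGroup X] [NormedSpace ℂ X] [CompleteSpace X]
    [Nontrivial X] (T : X →L[ℂ] X) (b s : ℕ → ℝ) (q : ℕ)
    (hb0 : ∀ n, 0 < b n) (hbH : Hindex b ≠ ⊤)
    (hbtop : Filter.Tendsto b Filter.atTop Filter.atTop)
    (hTb : Filter.Tendsto (fun n => ‖T ^ n‖ / b n) Filter.atTop (nhds 0))
    (hs0 : ∀ n, 0 < s n) (hsmono : Monotone s)
    (hstop : Filter.Tendsto s Filter.atTop Filter.atTop)
    (hsrat : Filter.Tendsto (fun n => s (n + 1) / s n) Filter.atTop (nhds 1))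
    (hq : 2 ≤ q) (hsq : Summable fun n => |dSeq^[q] s n|)
    (hbs : ∃ M : ℝ, ∀ n, |b n / s n| ≤ M) :
    Filter.Tendsto (fun n => ‖T ^ n‖ / s n) Filter.atTop (nhds 0) ∧
    ((∃ P : X →L[ℂ] X,
        Filter.Tendsto
          (fun n : ℕ => (((s n)⁻¹ : ℝ) : ℂ) •
            ∑ k ∈ Finset.range (n + 1), ((dSeq s (n - k) : ℝ) : ℂ) • T ^ k)
          Filter.atTop (nhds P)) ↔
      (IsClosed (LinearMap.range ((1 - T : X →L[ℂ] X) : X →ₗ[ℂ] X) : Set X) ∧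
        IsCompl (LinearMap.ker ((1 - T : X →L[ℂ] X) : X →ₗ[ℂ] X)) (LinearMap.range ((1 - T : X →L[ℂ] X) : X →ₗ[ℂ] X)))) ∧
    ∀ P : X →L[ℂ] X,
      Filter.Tendsto
          (fun n : ℕ => (((s n)⁻¹ : ℝ) : ℂ) •
            ∑ k ∈ Finset.range (n + 1), ((dSeq s (n - k) : ℝ) : ℂ) • T ^ k)
          Filter.atTop (nhds P) →
        (P * P = P ∧ LinearMap.range (P : X →ₗ[ℂ] X) = LinearMap.ker ((1 - T : X →L[ℂ] X) : X →ₗ[ℂ] X) ∧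
          LinearMap.ker (P : X →ₗ[ℂ] X) = LinearMap.range ((1 - T : X →L[ℂ] X) : X →ₗ[ℂ] X)) :=
  stmt18_general T b s q hb0 hTb hs0 hsmono hstop hsrat hq hsq hbs
end

section
/- Let T be the bounded linear operator on the complex Hilbert space ℓ² = ℓ²(ℕ, ℂ) given by the unilateral weighted shift T x = ∑_{n=0}^{∞} e^{1/√(n+1)} x(n) e_{n+1}, where {e_n : n ∈ ℕ} is the canonical orthonormal basis of ℓ². Then for each k ≥ 1 the operator norm satisfies ‖T^k‖ = e^{∑_{j=1}^{k} 1/√j}, the spectral radius of T equals 1, and for every α ∈ (0, +∞) one has ‖T^k‖/k^α → +∞ as k → +∞; in particular, for no m ∈ ℕ is the sequence (‖T^n‖/n^m)_{n≥1} bounded from above. -/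
/-!
`T` is a weighted shift with decreasing weights `wₙ = e^{1/√(n+1)}`, so `T^k` multiplies
coordinate `n` by `w_n ⋯ w_{n+k-1}`, which is largest at `n = 0`; testing on `e₀` shows that
`‖T^k‖ = e^{s_k}` with `s_k = ∑_{j=1}^k 1/√j`. Since `√k ≤ s_k` the norms outgrow every power of
`k`, while `s_k / k → 0` (a Cesàro mean of a null sequence) gives spectral radius `1` by
Gelfand's formula.
-/

open Filter Finset Real Topology
open scoped ENNReal

theorem lp.norm_le_of_shift {E : ℕ → Type*} [∀ i, NormedAddCommGroup (E i)] {p : ℝ≥0∞}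
    [Fact (1 ≤ p)] (hp : p ≠ ∞) {x y : lp E p} {k : ℕ} {C : ℝ} (hC : 0 ≤ C)
    (hy_lt : ∀ i < k, y i = 0) (hy_add : ∀ n, ‖y (n + k)‖ ≤ C * ‖x n‖) :
    ‖y‖ ≤ C * ‖x‖ := by
  have hp' : 0 < p.toReal :=
    ENNReal.toReal_pos (zero_lt_one.trans_le Fact.out).ne' hp
  have hy := (lp.memℓp y).summable hp'
  have hx := (lp.memℓp x).summable hp'
  rw [← rpow_le_rpow_iff (norm_nonneg _) (by positivity) hp', mul_rpow hC (norm_nonneg _),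
    lp.norm_rpow_eq_tsum hp', lp.norm_rpow_eq_tsum hp', ← tsum_mul_left,
    ← hy.sum_add_tsum_nat_add k, sum_eq_zero fun i hi => by
      simp [hy_lt i (mem_range.mp hi), hp'.ne'], zero_add]
  refine ((summable_nat_add_iff k).2 hy).tsum_le_tsum (fun n => ?_) (hx.mul_left _)
  rw [← mul_rpow hC (norm_nonneg _)]
  exact rpow_le_rpow (norm_nonneg _) (hy_add n) hp'.le

def IsWeightedShift {p : ℝ≥0∞} [Fact (1 ≤ p)]
    (T : lp (fun _ : ℕ => ℂ) p →L[ℂ] lp (fun _ : ℕ => ℂ) p) (w : ℕ → ℂ) : Prop :=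
  ∀ x : lp (fun _ : ℕ => ℂ) p, T x 0 = 0 ∧ ∀ n, T x (n + 1) = w n * x n

namespace IsWeightedShift

variable {p : ℝ≥0∞} [Fact (1 ≤ p)] {T : lp (fun _ : ℕ => ℂ) p →L[ℂ] lp (fun _ : ℕ => ℂ) p}
  {w : ℕ → ℂ}

theorem pow_apply_of_lt (hT : IsWeightedShift T w) (x : lp (fun _ : ℕ => ℂ) p) {k m : ℕ}
    (hm : m < k) : (T ^ k) x m = 0 := by
  induction k generalizing m with
  | zero => omega
  | succ k ih =>
    rw [pow_succ', mul_apply_eq_comp]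
    rcases m with _ | m
    · exact (hT _).1
    · rw [(hT _).2, ih (by omega), mul_zero]

theorem pow_apply_add (hT : IsWeightedShift T w) (x : lp (fun _ : ℕ => ℂ) p) (k n : ℕ) :
    (T ^ k) x (n + k) = (∏ i ∈ range k, w (n + i)) * x n := by
  induction k with
  | zero => simp
  | succ k ih =>
    rw [pow_succ', mul_apply_eq_comp, ← add_assoc, (hT _).2, ih, prod_range_succ]
    ring

theorem norm_pow_le (hT : IsWeightedShift T w) (hp : p ≠ ∞) {k : ℕ} {C : ℝ}
    (hC : ∀ n, ‖∏ i ∈ range k, w (n + i)‖ ≤ C) : ‖T ^ k‖ ≤ C := by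
  have hC₀ : 0 ≤ C := (norm_nonneg _).trans (hC 0)
  refine ContinuousLinearMap.opNorm_le_bound _ hC₀ fun x => ?_
  refine lp.norm_le_of_shift hp hC₀ (fun i hi => hT.pow_apply_of_lt x hi) fun n => ?_
  rw [hT.pow_apply_add, norm_mul]
  exact mul_le_mul_of_nonneg_right (hC n) (norm_nonneg _)

theorem norm_prod_le_norm_pow (hT : IsWeightedShift T w) (k : ℕ) :
    ‖∏ i ∈ range k, w i‖ ≤ ‖T ^ k‖ := by
  have hp : p ≠ 0 := (zero_lt_one.trans_le Fact.out).ne'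
  set e₀ : lp (fun _ : ℕ => ℂ) p := lp.single p 0 1
  have he₀ : ‖e₀‖ = 1 := by simp [e₀, lp.norm_single (pos_iff_ne_zero.2 hp)]
  calc ‖∏ i ∈ range k, w i‖ = ‖(T ^ k) e₀ (0 + k)‖ := by
        rw [hT.pow_apply_add]; simp [e₀]
    _ ≤ ‖(T ^ k) e₀‖ := lp.norm_apply_le_norm hp _ _
    _ ≤ ‖T ^ k‖ := by simpa [he₀] using (T ^ k).le_opNorm e₀

theorem norm_pow_of_antitone (hT : IsWeightedShift T w) (hp : p ≠ ∞)
    (hw : Antitone fun n => ‖w n‖) (k : ℕ) : ‖T ^ k‖ = ∏ i ∈ range k, ‖w i‖ := by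
  rw [← norm_prod]
  refine le_antisymm (hT.norm_pow_le hp fun n => ?_) (hT.norm_prod_le_norm_pow k)
  simp only [norm_prod]
  exact prod_le_prod (fun _ _ => norm_nonneg _) fun i _ => hw (Nat.le_add_left i n)

end IsWeightedShift

theorem sqrt_le_sum_inv_sqrt (k : ℕ) : √(k : ℝ) ≤ ∑ i ∈ range k, 1 / √((i : ℝ) + 1) := by
  rcases k.eq_zero_or_pos with rfl | hk
  · simp
  have hterm : ∀ i ∈ range k, 1 / √(k : ℝ) ≤ 1 / √((i : ℝ) + 1) := fun i hi => by
    have hik : (i : ℝ) + 1 ≤ k := by exact_mod_cast mem_range.mp hi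
    gcongr
  calc √(k : ℝ) = k * (1 / √(k : ℝ)) := by rw [mul_one_div, div_sqrt]
    _ ≤ ∑ i ∈ range k, 1 / √((i : ℝ) + 1) := by
      simpa using card_nsmul_le_sum _ _ _ hterm

theorem tendsto_inv_mul_sum_inv_sqrt :
    Tendsto (fun k : ℕ => (k⁻¹ : ℝ) * ∑ i ∈ range k, 1 / √((i : ℝ) + 1)) atTop (𝓝 0) := by
  refine Tendsto.cesaro ?_
  have h : Tendsto (fun n : ℕ => √((n : ℝ) + 1)) atTop atTop :=
    tendsto_sqrt_atTop.comp (tendsto_natCast_atTop_atTop.atTop_add tendsto_const_nhds)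
  simp only [one_div]
  exact h.inv_tendsto_atTop

theorem tendsto_exp_div_rpow_of_sqrt_le {s : ℕ → ℝ} (hs : ∀ k : ℕ, √(k : ℝ) ≤ s k) (α : ℝ) :
    Tendsto (fun k : ℕ => exp (s k) / (k : ℝ) ^ α) atTop atTop := by
  have h := (tendsto_exp_div_rpow_atTop (2 * α)).comp
    (tendsto_sqrt_atTop.comp tendsto_natCast_atTop_atTop)
  refine tendsto_atTop_mono (fun k => ?_) h
  have hk : √(k : ℝ) ^ (2 * α) = (k : ℝ) ^ α := by
    rw [sqrt_eq_rpow, ← rpow_mul k.cast_nonneg]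
    ring_nf
  simp only [Function.comp_apply, hk]
  gcongr
  exact hs k

theorem spectralRadius_eq_one_of_norm_pow_eq_exp {A : Type*} [NormedRing A] [NormedAlgebra ℂ A]
    [CompleteSpace A] {a : A} {s : ℕ → ℝ} (ha : ∀ n, ‖a ^ n‖ = exp (s n))
    (hs : Tendsto (fun n : ℕ => (n⁻¹ : ℝ) * s n) atTop (𝓝 0)) : spectralRadius ℂ a = 1 := by
  have h : Tendsto (fun n : ℕ => ENNReal.ofReal (‖a ^ n‖ ^ (1 / n : ℝ))) atTop (𝓝 1) := by
    simp only [ha, ← exp_mul]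
    simpa [mul_comm] using ENNReal.tendsto_ofReal ((continuous_exp.tendsto 0).comp hs)
  exact tendsto_nhds_unique (spectrum.pow_norm_pow_one_div_tendsto_nhds_spectralRadius a) h

theorem norm_pow_eq_exp_sum_inv_sqrt {p : ℝ≥0∞} [Fact (1 ≤ p)] (hp : p ≠ ∞)
    {T : lp (fun _ : ℕ => ℂ) p →L[ℂ] lp (fun _ : ℕ => ℂ) p}
    (hT : IsWeightedShift T fun n => (exp (1 / √((n : ℝ) + 1)) : ℂ)) (k : ℕ) :
    ‖T ^ k‖ = exp (∑ i ∈ range k, 1 / √((i : ℝ) + 1)) := by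
  have hw : ∀ n : ℕ, ‖(exp (1 / √((n : ℝ) + 1)) : ℂ)‖ = exp (1 / √((n : ℝ) + 1)) := fun n =>
    Complex.norm_of_nonneg (exp_pos _).le
  rw [hT.norm_pow_of_antitone hp, exp_sum]
  · simp only [hw]
  · refine fun m n hmn => ?_
    simp only [hw]
    gcongr

/-- Example 6.3: let `T` be the unilateral weighted shift on `ℓ² = ℓ²(ℕ, ℂ)` with weights
`e^{1/√(n+1)}`, i.e. `(Tx)(0) = 0` and `(Tx)(n+1) = e^{1/√(n+1)} x(n)`.  Then
`‖T^k‖ = e^{∑_{j=1}^{k} 1/√j}` for every `k ≥ 1`, the spectral radius of `T` equals `1`,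
`‖T^k‖/k^α → +∞` for every `α ∈ (0, +∞)`, and for no `m ∈ ℕ` is `(‖T^n‖/n^m)_{n≥1}`
bounded from above. -/
theorem stmt19 (T : lp (fun _ : ℕ => ℂ) 2 →L[ℂ] lp (fun _ : ℕ => ℂ) 2)
    (hT : ∀ x : lp (fun _ : ℕ => ℂ) 2,
      (T x : ℕ → ℂ) 0 = 0 ∧
      ∀ n : ℕ, (T x : ℕ → ℂ) (n + 1) =
        (Real.exp (1 / Real.sqrt ((n : ℝ) + 1)) : ℂ) * (x : ℕ → ℂ) n) :
    (∀ k : ℕ, 1 ≤ k → ‖T ^ k‖ = Real.exp (∑ j ∈ Finset.Icc 1 k, 1 / Real.sqrt (j : ℝ))) ∧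
    spectralRadius ℂ T = 1 ∧
    (∀ α : ℝ, 0 < α →
      Filter.Tendsto (fun k : ℕ => ‖T ^ k‖ / (k : ℝ) ^ α) Filter.atTop Filter.atTop) ∧
    ∀ m : ℕ, ¬∃ M : ℝ, ∀ n : ℕ, 1 ≤ n → ‖T ^ n‖ / (n : ℝ) ^ m ≤ M := by
  have hnorm := norm_pow_eq_exp_sum_inv_sqrt ENNReal.ofNat_ne_top hT
  have hgrowth (α : ℝ) : Tendsto (fun k : ℕ => ‖T ^ k‖ / (k : ℝ) ^ α) atTop atTop := by
    simpa only [hnorm] using tendsto_exp_div_rpow_of_sqrt_le sqrt_le_sum_inv_sqrt α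
  refine ⟨fun k _ => ?_, spectralRadius_eq_one_of_norm_pow_eq_exp hnorm
    tendsto_inv_mul_sum_inv_sqrt, fun α _ => hgrowth α, ?_⟩
  · rw [hnorm, range_eq_Ico]
    exact_mod_cast congrArg exp (sum_Ico_add' (fun j : ℕ => 1 / √(j : ℝ)) 0 k 1)
  · rintro m ⟨M, hM⟩
    obtain ⟨n, hn, hnM⟩ :=
      ((eventually_ge_atTop 1).and ((hgrowth m).eventually_gt_atTop M)).exists
    rw [rpow_natCast] at hnM
    exact (hM n hn).not_gt hnM
end
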